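/- arXiv:2211.02155 — 8 statements merged into one kernel-verified Lean document; each statement's English description precedes it below -/
import Mathlib

section
/- For every n ≥ 1, the cyclic inverse monoid CI_n has exactly n·2^n − n + 1 elements. -/
/-!
Common setup.  `Ω_n = {1, …, n}` is modelled by `Fin n`, where `a : Fin n`
represents the element `a + 1` of `Ω_n`.  Partial maps on `Ω_n` are modelled as
functions `Fin n → Option (Fin n)`, composed left-to-right (as in the paper),
which makes them a monoid (the monoid `PT_n` of all partial transformations).
-/

/-- Partial maps on `Ω_n`, composed left-to-right. -/
abbrev PMap (n : ℕ) := Fin n → Option (Fin n)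

instance PMap.instMonoid (n : ℕ) : Monoid (PMap n) where
  one := fun a => some a
  mul f g := fun a => (f a).bind g
  one_mul f := rfl
  mul_one f := funext fun a => by
    show (f a).bind (fun b => some b) = f a
    cases f a <;> rfl
  mul_assoc f g h := funext fun a => by
    show ((f a).bind g).bind h = (f a).bind (fun b => (g b).bind h)
    cases f a <;> rfl

/-- The cyclic permutation `g : i ↦ i + 1` (for `1 ≤ i ≤ n-1`), `n ↦ 1`, of `Ω_n`,
as a (total) partial map. -/
def gmap (n : ℕ) : PMap n := fun a => some (finRotate n a)

/-- `emap n i` is the partial identity on `Ω_n ∖ {i}` (the map `e_i` of the paper);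
recall that `a : Fin n` represents the element `a + 1` of `Ω_n = {1, …, n}`. -/
def emap (n i : ℕ) : PMap n := fun a => if (a : ℕ) + 1 = i then none else some a

/-- The cyclic inverse monoid `CI_n`, as the set of all restrictions of elements of
`C_n = {1, g, g², …}` (including the empty map). -/
def CIn (n : ℕ) : Set (PMap n) :=
  {f | ∃ k : ℕ, ∀ a : Fin n, f a ≠ none → f a = (gmap n ^ k) a}

/-- A partial map is order-preserving if it preserves `≤` on its domain. -/
def OrdPres {n : ℕ} (f : PMap n) : Prop :=
  ∀ a b c d : Fin n, a ≤ b → f a = some c → f b = some d → c ≤ d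

/-- `OCI_n`: the order-preserving elements of `CI_n`. -/
def OCIn (n : ℕ) : Set (PMap n) := {f | f ∈ CIn n ∧ OrdPres f}

/-- `x = g e_1`, the partial map with domain `{1, …, n-1}` sending `i ↦ i + 1`. -/
def xmap (n : ℕ) : PMap n := gmap n * emap n 1

/-- `y = x⁻¹`, the partial map with domain `{2, …, n}` sending `i ↦ i - 1`. -/
def ymap (n : ℕ) : PMap n := fun a =>
  if 1 ≤ (a : ℕ) then some ⟨(a : ℕ) - 1, Nat.lt_of_le_of_lt (Nat.sub_le _ _) a.isLt⟩ else none

/-- For `n ≥ 1`, the cyclic inverse monoid `CI_n` has exactly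
`n·2ⁿ - n + 1` elements. -/
lemma gmap_pow (n k : ℕ) (a : Fin n) : (gmap n ^ k) a = some ((finRotate n ^ k) a) := by
  induction k with
  | zero => rfl
  | succ k ih =>
    have h1 : (gmap n ^ (k+1)) a = ((gmap n ^ k) a).bind (gmap n) := by
      rw [pow_succ]; rfl
    rw [h1, ih, pow_succ', Equiv.Perm.mul_apply]
    rfl

open Fin.NatCast Fin.CommRing in
lemma finRotate_pow (m k : ℕ) (a : Fin (m+1)) :
    (finRotate (m+1) ^ k) a = a + (k : Fin (m+1)) := by
  induction k with
  | zero => simp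
  | succ k ih =>
    rw [pow_succ', Equiv.Perm.mul_apply, ih, finRotate_succ_apply]
    push_cast
    ring

def Fmap (m : ℕ) (p : Fin (m+1) × Finset (Fin (m+1))) : PMap (m+1) :=
  fun a => if a ∈ p.2 then some (a + p.1) else none

open Fin.NatCast Fin.CommRing in
lemma CIn_eq (m : ℕ) : CIn (m+1) = Fmap m '' Set.univ := by
  ext f
  constructor
  · rintro ⟨k, hk⟩
    refine ⟨((k : Fin (m+1)), Finset.univ.filter fun a => f a ≠ none), trivial, ?_⟩
    funext a
    by_cases h : f a = none
    · simp [Fmap, h]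
    · have := hk a h
      rw [gmap_pow, finRotate_pow] at this
      simp [Fmap, h, this.symm]
  · rintro ⟨⟨k, S⟩, -, rfl⟩
    refine ⟨k.val, fun a ha => ?_⟩
    rw [gmap_pow, finRotate_pow, Fin.cast_val_eq_self]
    simp only [Fmap] at ha ⊢
    by_cases h : a ∈ S <;> simp [h] at ha ⊢

lemma CIn_card' (m : ℕ) :
    (CIn (m+1)).ncard = (m+1) * 2 ^ (m+1) - (m+1) + 1 := by
  classical
  set c : PMap (m+1) := fun _ => none with hc
  set T : Set (Fin (m+1) × Finset (Fin (m+1))) := {p | p.2.Nonempty} with hT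
  have hsplit : CIn (m+1) = {c} ∪ Fmap m '' T := by
    rw [CIn_eq]
    ext f
    constructor
    · rintro ⟨p, -, rfl⟩
      by_cases h : p.2 = ∅
      · left
        funext a
        simp [Fmap, h, hc]
      · right
        exact ⟨p, Finset.nonempty_iff_ne_empty.2 h, rfl⟩
    · rintro (h | ⟨p, -, rfl⟩)
      · exact ⟨(0, ∅), trivial, by funext a; simp [Fmap, h]; simp_all [hc]⟩
      · exact ⟨p, trivial, rfl⟩
  have hdisj : Disjoint {c} (Fmap m '' T) := by
    rw [Set.disjoint_singleton_left]
    rintro ⟨p, hp, hpe⟩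
    obtain ⟨a, ha⟩ := hp
    have := congrFun hpe a
    simp [Fmap, ha, hc] at this
  have hinj : Set.InjOn (Fmap m) T := by
    rintro ⟨k, S⟩ hS ⟨k', S'⟩ hS' h
    have hdom : S = S' := by
      ext a
      have := congrFun h a
      by_cases h1 : a ∈ S <;> by_cases h2 : a ∈ S' <;> simp [Fmap, h1, h2] at this ⊢
    subst hdom
    obtain ⟨a, ha⟩ := hS
    have := congrFun h a
    simp [Fmap, ha] at this
    simp [this]
  have hTcard : T.ncard = (m+1) * (2 ^ (m+1) - 1) := by
    have : T = ((Finset.univ ×ˢ (Finset.univ.erase (∅ : Finset (Fin (m+1))))) : Finset (Fin (m+1) × Finset (Fin (m+1)))) := by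
      ext p
      simp [hT, Finset.nonempty_iff_ne_empty]
    rw [this, Set.ncard_coe_finset, Finset.card_product, Finset.card_erase_of_mem (by simp),
      Finset.card_univ, Finset.card_univ, Fintype.card_fin, Fintype.card_finset, Fintype.card_fin]
  rw [hsplit, Set.ncard_union_eq hdisj (Set.finite_singleton c) (Set.toFinite _),
    Set.ncard_singleton, Set.ncard_image_of_injOn hinj, hTcard, Nat.mul_sub, mul_one]
  have h1 : m + 1 ≤ (m+1) * 2^(m+1) :=
    Nat.le_mul_of_pos_right _ (Nat.pow_pos (by norm_num))
  omega

/-- restated -/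
theorem CIn.card (n : ℕ) (hn : 1 ≤ n) : (CIn n).ncard = n * 2 ^ n - n + 1 := by
  obtain ⟨m, rfl⟩ : ∃ m, n = m + 1 := ⟨n - 1, (Nat.succ_pred_eq_of_pos hn).symm⟩
  exact CIn_card' m
end

section
/- For every n ≥ 1 and every α ∈ CI_n we have α = (∏_{k ∈ Ω_n ∖ Dom(α)} e_k) · g^i for some i ∈ {0,1,…,n−1}; consequently the set {g, e_1, e_2, …, e_n} generates the monoid CI_n. Moreover, e_i = g^{n−i+1} e_1 g^{i−1} for all i ∈ {1,…,n}, so the two-element set {g, e_1} also generates CI_n. -/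
open Fin.NatCast

lemma PMap.mul_apply {n : ℕ} (f g : PMap n) (a : Fin n) : (f * g) a = (f a).bind g := rfl

lemma PMap.one_apply {n : ℕ} (a : Fin n) : (1 : PMap n) a = some a := rfl

lemma gpow_apply (m k : ℕ) (a : Fin (m+1)) :
    (gmap (m+1) ^ k) a = some (a + (k : Fin (m+1))) := by
  induction k with
  | zero => rw [pow_zero, PMap.one_apply]; simp
  | succ k ih =>
    rw [pow_succ, PMap.mul_apply, ih, Option.bind_some]
    show some (finRotate (m+1) (a + (k : Fin (m+1)))) = _
    rw [finRotate_succ_apply]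
    congr 1
    push_cast
    rw [add_assoc]

lemma add_cast_val (m : ℕ) (a : Fin (m+1)) (k : ℕ) :
    (a + (k : Fin (m+1))).val = (a.val + k) % (m+1) := by
  rw [Fin.val_add, Fin.val_natCast]
  conv_rhs => rw [Nat.add_mod]
  rw [Nat.mod_eq_of_lt a.isLt]

lemma coeList (n : ℕ) (l : List (Fin n)) :
    (do let a ← l; pure ((a : ℕ)) : List ℕ) = l.map Fin.val := by
  induction l with
  | nil => rfl
  | cons a l ih =>
    simp only [List.pure_def, List.bind_eq_flatMap, List.flatMap_cons] at ih ⊢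
    rw [ih, List.map_cons]; rfl

lemma prod_emap_apply (n : ℕ) (l : List (Fin n)) (b : Fin n) :
    ((l.map ((fun a : ℕ => emap n (a + 1)) ∘ Fin.val)).prod) b =
      if b ∈ l then none else some b := by
  induction l with
  | nil => simp [PMap.one_apply]
  | cons a l ih =>
    rw [List.map_cons, List.prod_cons, PMap.mul_apply]
    by_cases hba : b = a
    · have h1 : ((fun a : ℕ => emap n (a + 1)) ∘ Fin.val) a b = none := by
        simp [emap, hba]
      rw [h1, Option.bind_none]
      simp [hba]
    · have h1 : ((fun a : ℕ => emap n (a + 1)) ∘ Fin.val) a b = some b := by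
        have : (b : ℕ) ≠ (a : ℕ) := fun hc => hba (Fin.ext hc)
        simp [emap, this]
      rw [h1, Option.bind_some, ih]
      simp [hba]

lemma gmap_mem_CIn (n : ℕ) : gmap n ∈ CIn n :=
  ⟨1, fun a _ => by rw [pow_one]⟩

lemma emap_mem_CIn (n i : ℕ) : emap n i ∈ CIn n := by
  refine ⟨0, fun a h => ?_⟩
  rw [pow_zero, PMap.one_apply]
  by_cases hc : (a : ℕ) + 1 = i
  · exact absurd (by simp [emap, hc]) h
  · simp [emap, hc]

/-- `CI_n` as a submonoid. -/
def CInSubmonoid (n : ℕ) : Submonoid (PMap n) where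
  carrier := CIn n
  one_mem' := ⟨0, fun a _ => by rw [pow_zero]⟩
  mul_mem' := by
    rintro f g ⟨k₁, h₁⟩ ⟨k₂, h₂⟩
    refine ⟨k₁ + k₂, fun a hne => ?_⟩
    rw [PMap.mul_apply] at hne ⊢
    cases hfa : f a with
    | none => rw [hfa] at hne; exact absurd rfl hne
    | some b =>
      rw [hfa] at hne
      rw [Option.bind_some] at hne ⊢
      have hfa' : (gmap n ^ k₁) a = some b := by
        rw [← h₁ a (by rw [hfa]; simp), hfa]
      rw [h₂ b hne, pow_add, PMap.mul_apply, hfa', Option.bind_some]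

lemma emap_decomp (m i : ℕ) (h1 : 1 ≤ i) (h2 : i ≤ m + 1) :
    emap (m+1) i = gmap (m+1) ^ (m + 1 - i + 1) * emap (m+1) 1 * gmap (m+1) ^ (i - 1) := by
  funext a
  have halt : (a : ℕ) < m + 1 := a.isLt
  rw [PMap.mul_apply, PMap.mul_apply, gpow_apply, Option.bind_some]
  have hs : (a + ((m + 1 - i + 1 : ℕ) : Fin (m+1))).val = ((a : ℕ) + (m + 1 - i + 1)) % (m+1) :=
    add_cast_val m a _
  by_cases h : (a : ℕ) + 1 = i
  · have hz : (a + ((m + 1 - i + 1 : ℕ) : Fin (m+1))).val = 0 := by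
      rw [hs]
      have hsum : (a : ℕ) + (m + 1 - i + 1) = m + 1 := by omega
      rw [hsum, Nat.mod_self]
    have he : emap (m+1) 1 (a + ((m + 1 - i + 1 : ℕ) : Fin (m+1))) = none := by
      simp only [emap]
      rw [if_pos (by omega)]
    rw [he]
    simp [emap, h]
  · have hz : (a + ((m + 1 - i + 1 : ℕ) : Fin (m+1))).val ≠ 0 := by
      rw [hs]
      rcases Nat.lt_or_ge ((a : ℕ) + (m + 1 - i + 1)) (m+1) with hlt | hge
      · rw [Nat.mod_eq_of_lt hlt]; omega
      · rw [Nat.mod_eq_sub_mod hge, Nat.mod_eq_of_lt (by omega)]; omega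
    have he : emap (m+1) 1 (a + ((m + 1 - i + 1 : ℕ) : Fin (m+1))) =
        some (a + ((m + 1 - i + 1 : ℕ) : Fin (m+1))) := by
      simp only [emap]
      rw [if_neg (by omega)]
    rw [he, Option.bind_some, gpow_apply]
    have key : a + ((m + 1 - i + 1 : ℕ) : Fin (m+1)) + ((i - 1 : ℕ) : Fin (m+1)) = a := by
      rw [add_assoc, ← Nat.cast_add]
      have : (m + 1 - i + 1) + (i - 1) = m + 1 := by omega
      rw [this, Fin.natCast_self, add_zero]
    rw [key]
    simp [emap, h]

/-- Every `α ∈ CI_n` can be written as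
`(∏_{k ∈ Ω_n ∖ Dom α} e_k) · gⁱ` for some `0 ≤ i ≤ n-1` (the product being taken in
increasing order of the indices); hence `{g, e_1, …, e_n}` generates the monoid `CI_n`.
Moreover `e_i = g^{n-i+1} e_1 g^{i-1}` for `1 ≤ i ≤ n`, so `{g, e_1}` also generates
`CI_n`. -/
theorem CIn.generators (n : ℕ) (hn : 1 ≤ n) :
    (∀ α ∈ CIn n, ∃ i : ℕ, i < n ∧
      α = ((((Finset.univ.filter (fun a : Fin n => α a = none)).sort (· ≤ ·)).map
              (fun a => emap n ((a : ℕ) + 1))).prod) * gmap n ^ i) ∧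
    (Submonoid.closure ({gmap n} ∪ {f | ∃ i : ℕ, 1 ≤ i ∧ i ≤ n ∧ f = emap n i}) :
        Set (PMap n)) = CIn n ∧
    (∀ i : ℕ, 1 ≤ i → i ≤ n →
      emap n i = gmap n ^ (n - i + 1) * emap n 1 * gmap n ^ (i - 1)) ∧
    (Submonoid.closure {gmap n, emap n 1} : Set (PMap n)) = CIn n := by
  obtain ⟨m, rfl⟩ : ∃ m, n = m + 1 := ⟨n - 1, by omega⟩
  have part1 : ∀ α ∈ CIn (m+1), ∃ i : ℕ, i < m + 1 ∧
      α = ((((Finset.univ.filter (fun a : Fin (m+1) => α a = none)).sort (· ≤ ·)).map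
              (fun a => emap (m+1) ((a : ℕ) + 1))).prod) * gmap (m+1) ^ i := by
    rintro α ⟨k, hk⟩
    refine ⟨k % (m+1), Nat.mod_lt _ (Nat.succ_pos m), ?_⟩
    funext a
    rw [PMap.mul_apply, coeList, List.map_map, prod_emap_apply]
    have hmem : (a ∈ ((Finset.univ.filter (fun b : Fin (m+1) => α b = none)).sort
        (· ≤ ·))) ↔ α a = none := by
      simp only [Finset.mem_sort, Finset.mem_filter, Finset.mem_univ, true_and]
    by_cases h : α a = none
    · rw [if_pos (hmem.mpr h), h, Option.bind_none]
    · rw [if_neg (fun hc => h (hmem.mp hc)), Option.bind_some, hk a h, gpow_apply, gpow_apply]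
      congr 2
      apply Fin.ext
      rw [Fin.val_natCast, Fin.val_natCast, Nat.mod_mod_of_dvd _ dvd_rfl]
  have hgen : ({gmap (m+1)} ∪ {f | ∃ i : ℕ, 1 ≤ i ∧ i ≤ m + 1 ∧ f = emap (m+1) i} :
      Set (PMap (m+1))) ⊆ CInSubmonoid (m+1) := by
    rintro f (rfl | ⟨i, _, _, rfl⟩)
    · exact gmap_mem_CIn _
    · exact emap_mem_CIn _ _
  refine ⟨part1, ?_, fun i h1 h2 => emap_decomp m i h1 h2, ?_⟩
  · have hle : Submonoid.closure
        ({gmap (m+1)} ∪ {f | ∃ i : ℕ, 1 ≤ i ∧ i ≤ m + 1 ∧ f = emap (m+1) i}) ≤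
        CInSubmonoid (m+1) := Submonoid.closure_le.mpr hgen
    apply Set.Subset.antisymm
    · exact fun x hx => hle hx
    · intro α hα
      obtain ⟨i, _, heq⟩ := part1 α hα
      rw [coeList, List.map_map] at heq
      rw [heq]
      have hgmem : gmap (m+1) ∈ Submonoid.closure
          ({gmap (m+1)} ∪ {f | ∃ i : ℕ, 1 ≤ i ∧ i ≤ m + 1 ∧ f = emap (m+1) i}) :=
        Submonoid.subset_closure (Or.inl rfl)
      refine mul_mem (Submonoid.list_prod_mem _ ?_) (pow_mem hgmem i)
      intro x hx
      obtain ⟨b, _, rfl⟩ := List.mem_map.mp hx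
      exact Submonoid.subset_closure
        (Or.inr ⟨(b : ℕ) + 1, by omega, by have := b.isLt; omega, rfl⟩)
  · have hg : gmap (m+1) ∈ Submonoid.closure {gmap (m+1), emap (m+1) 1} :=
      Submonoid.subset_closure (Set.mem_insert _ _)
    have he : emap (m+1) 1 ∈ Submonoid.closure {gmap (m+1), emap (m+1) 1} :=
      Submonoid.subset_closure (Set.mem_insert_of_mem _ rfl)
    have hsub : ({gmap (m+1), emap (m+1) 1} : Set (PMap (m+1))) ⊆ CInSubmonoid (m+1) := by
      rintro f (rfl | rfl)
      · exact gmap_mem_CIn _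
      · exact emap_mem_CIn _ _
    have hle : Submonoid.closure {gmap (m+1), emap (m+1) 1} ≤ CInSubmonoid (m+1) :=
      Submonoid.closure_le.mpr hsub
    apply Set.Subset.antisymm
    · exact fun x hx => hle hx
    · intro α hα
      obtain ⟨i, _, heq⟩ := part1 α hα
      rw [coeList, List.map_map] at heq
      rw [heq]
      refine mul_mem (Submonoid.list_prod_mem _ ?_) (pow_mem hg i)
      intro x hx
      obtain ⟨b, _, rfl⟩ := List.mem_map.mp hx
      rw [Function.comp_apply, emap_decomp m ((b : ℕ) + 1) (by omega) (by have := b.isLt; omega)]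
      exact mul_mem (mul_mem (pow_mem hg _) he) (pow_mem hg _)
end

section
/- For every n ≥ 1, the monoid OCI_n has exactly 3·2^n − 2n − 2 elements. -/
namespace OCIaux

open Finset
open Fin.NatCast

variable {m : ℕ}

/-- The map with domain `D` shifting by `k`. -/
def pm (k : Fin (m + 1)) (D : Finset (Fin (m + 1))) : PMap (m + 1) :=
  fun a => if a ∈ D then some (a + k) else none

def emptyPM (m : ℕ) : PMap (m + 1) := fun _ => none

lemma one_apply (a : Fin (m + 1)) : (1 : PMap (m + 1)) a = some a := rfl

lemma mul_apply (f g : PMap (m + 1)) (a : Fin (m + 1)) :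
    (f * g) a = (f a).bind g := rfl

lemma gmap_pow (k : ℕ) (a : Fin (m + 1)) :
    (gmap (m + 1) ^ k) a = some (a + (k : Fin (m + 1))) := by
  induction k with
  | zero => simp [one_apply]
  | succ k ih =>
    rw [pow_succ, mul_apply, ih]
    show (gmap (m + 1)) (a + (k : Fin (m + 1))) = _
    rw [gmap]
    simp only [finRotate_succ_apply]
    congr 1
    rw [Nat.cast_add, Nat.cast_one, add_assoc]

lemma pm_dom (k : Fin (m + 1)) (D : Finset (Fin (m + 1))) (a : Fin (m + 1)) :
    pm k D a ≠ none ↔ a ∈ D := by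
  by_cases h : a ∈ D <;> simp [pm, h]

lemma pm_inj_dom {k k' : Fin (m + 1)} {D D' : Finset (Fin (m + 1))}
    (h : pm k D = pm k' D') : D = D' := by
  ext a
  rw [← pm_dom k D a, ← pm_dom k' D' a, h]

lemma pm_injective (k : Fin (m + 1)) : Function.Injective (pm k) :=
  fun _ _ h => pm_inj_dom h

lemma pm_ne_empty {k : Fin (m + 1)} {D : Finset (Fin (m + 1))} (hD : D.Nonempty) :
    pm k D ≠ emptyPM m := by
  obtain ⟨a, ha⟩ := hD
  intro h
  have := congrFun h a
  simp [pm, ha, emptyPM] at this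

def lowSet (k : Fin (m + 1)) : Finset (Fin (m + 1)) :=
  univ.filter fun a => (a : ℕ) + (k : ℕ) ≤ m

def highSet (k : Fin (m + 1)) : Finset (Fin (m + 1)) :=
  univ.filter fun a => ¬ ((a : ℕ) + (k : ℕ) ≤ m)

lemma card_filter_lt (N c : ℕ) :
    (univ.filter fun a : Fin N => (a : ℕ) < c).card = min c N := by
  rw [Finset.card_filter, Fin.sum_univ_eq_sum_range (fun j => if j < c then 1 else 0),
    ← Finset.card_filter]
  have : (Finset.range N).filter (· < c) = Finset.range (min c N) := by
    ext x; simp only [mem_filter, mem_range, lt_min_iff]; omega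
  rw [this, Finset.card_range]

lemma lowSet_card (k : Fin (m + 1)) : (lowSet k).card = m + 1 - (k : ℕ) := by
  have h : lowSet k = univ.filter fun a : Fin (m + 1) => (a : ℕ) < m + 1 - (k : ℕ) := by
    apply Finset.filter_congr
    intro a _
    have := a.isLt
    have := k.isLt
    omega
  rw [h, card_filter_lt]
  have := k.isLt
  omega

lemma highSet_card (k : Fin (m + 1)) : (highSet k).card = (k : ℕ) := by
  have h := Finset.card_filter_add_card_filter_not
    (s := (univ : Finset (Fin (m + 1)))) (p := fun a => (a : ℕ) + (k : ℕ) ≤ m)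
  rw [Finset.card_univ, Fintype.card_fin] at h
  have hl := lowSet_card k
  unfold lowSet at hl
  unfold highSet
  have := k.isLt
  omega

/-- The explicit finset equal to `OCIn (m+1)`. -/
def S (m : ℕ) : Finset (PMap (m + 1)) :=
  insert (emptyPM m) (univ.biUnion fun k : Fin (m + 1) =>
    ((lowSet k).powerset.erase ∅).image (pm k) ∪
      ((highSet k).powerset.erase ∅).image (pm k))

lemma val_add_of_le {a k : Fin (m + 1)} (h : (a : ℕ) + (k : ℕ) ≤ m) :
    ((a + k : Fin (m + 1)) : ℕ) = (a : ℕ) + (k : ℕ) := by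
  rw [Fin.val_add, Nat.mod_eq_of_lt (by omega)]

lemma val_add_of_gt {a k : Fin (m + 1)} (h : ¬ ((a : ℕ) + (k : ℕ) ≤ m)) :
    ((a + k : Fin (m + 1)) : ℕ) = (a : ℕ) + (k : ℕ) - (m + 1) := by
  rw [Fin.val_add, Nat.mod_eq_sub_mod (by omega), Nat.mod_eq_of_lt (by
    have := a.isLt; have := k.isLt; omega)]

lemma pm_mem_OCIn_low {k : Fin (m + 1)} {D : Finset (Fin (m + 1))}
    (hD : D ⊆ lowSet k) : pm k D ∈ OCIn (m + 1) := by
  constructor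
  · refine ⟨(k : ℕ), fun a ha => ?_⟩
    rw [pm_dom] at ha
    rw [gmap_pow, Fin.cast_val_eq_self]
    simp [pm, ha]
  · intro a b c d hab ha hb
    simp only [pm] at ha hb
    by_cases haD : a ∈ D
    · by_cases hbD : b ∈ D
      · simp only [haD, if_true, Option.some.injEq] at ha
        simp only [hbD, if_true, Option.some.injEq] at hb
        subst ha; subst hb
        have h1 := (hD haD); have h2 := (hD hbD)
        simp only [lowSet, mem_filter] at h1 h2
        rw [Fin.le_def, val_add_of_le h1.2, val_add_of_le h2.2]
        rw [Fin.le_def] at hab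
        omega
      · simp [hbD] at hb
    · simp [haD] at ha

lemma pm_mem_OCIn_high {k : Fin (m + 1)} {D : Finset (Fin (m + 1))}
    (hD : D ⊆ highSet k) : pm k D ∈ OCIn (m + 1) := by
  constructor
  · refine ⟨(k : ℕ), fun a ha => ?_⟩
    rw [pm_dom] at ha
    rw [gmap_pow, Fin.cast_val_eq_self]
    simp [pm, ha]
  · intro a b c d hab ha hb
    simp only [pm] at ha hb
    by_cases haD : a ∈ D
    · by_cases hbD : b ∈ D
      · simp only [haD, if_true, Option.some.injEq] at ha
        simp only [hbD, if_true, Option.some.injEq] at hb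
        subst ha; subst hb
        have h1 := (hD haD); have h2 := (hD hbD)
        simp only [highSet, mem_filter] at h1 h2
        rw [Fin.le_def, val_add_of_gt h1.2, val_add_of_gt h2.2]
        rw [Fin.le_def] at hab
        omega
      · simp [hbD] at hb
    · simp [haD] at ha

lemma empty_mem_OCIn : emptyPM m ∈ OCIn (m + 1) := by
  constructor
  · exact ⟨0, fun a ha => absurd rfl ha⟩
  · intro a b c d _ ha _
    exact absurd ha (by simp [emptyPM])

lemma mem_erase_powerset {D T : Finset (Fin (m + 1))} :
    D ∈ T.powerset.erase ∅ ↔ D.Nonempty ∧ D ⊆ T := by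
  rw [Finset.mem_erase, Finset.mem_powerset, ← Finset.nonempty_iff_ne_empty]

lemma OCIn_eq_S : OCIn (m + 1) = ↑(S m) := by
  ext f
  simp only [S, Finset.coe_insert, Set.mem_insert_iff, Finset.coe_biUnion,
    Finset.coe_univ, Set.mem_univ, Set.iUnion_true, Set.mem_iUnion,
    Finset.coe_union, Set.mem_union, Finset.mem_coe, Finset.mem_image]
  constructor
  · rintro ⟨⟨k, hk⟩, hord⟩
    set k' : Fin (m + 1) := (k : Fin (m + 1)) with hk'
    set D : Finset (Fin (m + 1)) := univ.filter (fun a => f a ≠ none) with hD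
    have hfD : f = pm k' D := by
      funext a
      by_cases h : f a = none
      · have : a ∉ D := by simp [hD, h]
        simp [pm, this, h]
      · have haD : a ∈ D := by simp [hD, h]
        have := hk a h
        rw [gmap_pow] at this
        simp [pm, haD, this, hk']
    rcases Finset.eq_empty_or_nonempty D with hE | hNE
    · left
      rw [hfD, hE]
      funext a; simp [pm, emptyPM]
    · right
      refine ⟨k', ?_⟩
      have : D ⊆ lowSet k' ∨ D ⊆ highSet k' := by
        by_contra hcon
        push_neg at hcon
        obtain ⟨hc1, hc2⟩ := hcon
        obtain ⟨a, haD, ha⟩ := Finset.not_subset.mp hc1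
        obtain ⟨b, hbD, hb⟩ := Finset.not_subset.mp hc2
        simp only [lowSet, highSet, mem_filter, mem_univ, true_and, not_not] at ha hb
        -- a: a + k' > m ; b : b + k' ≤ m
        have hba : b ≤ a := by
          rw [Fin.le_def]; omega
        have hfa : f a = some (a + k') := by rw [hfD]; simp [pm, haD]
        have hfb : f b = some (b + k') := by rw [hfD]; simp [pm, hbD]
        have := hord b a (b + k') (a + k') hba hfb hfa
        rw [Fin.le_def, val_add_of_le hb, val_add_of_gt (by omega)] at this
        have := a.isLt
        omega
      rcases this with h | h
      · exact Or.inl ⟨D, mem_erase_powerset.mpr ⟨hNE, h⟩, hfD.symm⟩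
      · exact Or.inr ⟨D, mem_erase_powerset.mpr ⟨hNE, h⟩, hfD.symm⟩
  · rintro (rfl | ⟨k, (⟨D, hD, rfl⟩ | ⟨D, hD, rfl⟩)⟩)
    · exact empty_mem_OCIn
    · exact pm_mem_OCIn_low (mem_erase_powerset.mp hD).2
    · exact pm_mem_OCIn_high (mem_erase_powerset.mp hD).2

lemma low_high_disjoint (k : Fin (m + 1)) :
    Disjoint (((lowSet k).powerset.erase ∅).image (pm k))
      (((highSet k).powerset.erase ∅).image (pm k)) := by
  rw [Finset.disjoint_left]
  rintro x hx hy
  obtain ⟨D, hD, rfl⟩ := Finset.mem_image.mp hx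
  obtain ⟨D', hD', hDD'⟩ := Finset.mem_image.mp hy
  have hEq : D' = D := pm_inj_dom hDD'
  subst hEq
  rw [mem_erase_powerset] at hD hD'
  obtain ⟨⟨a, ha⟩, hsub⟩ := hD
  have h1 := hsub ha
  have h2 := hD'.2 ha
  simp only [lowSet, highSet, mem_filter] at h1 h2
  exact h2.2 h1.2

lemma k_disjoint :
    Set.PairwiseDisjoint ((univ : Finset (Fin (m + 1))) : Set (Fin (m + 1)))
      (fun k => ((lowSet k).powerset.erase ∅).image (pm k) ∪
        ((highSet k).powerset.erase ∅).image (pm k)) := by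
  intro k _ k' _ hkk'
  rw [Function.onFun, Finset.disjoint_left]
  rintro x hx hy
  simp only [Finset.mem_union, Finset.mem_image] at hx hy
  obtain ⟨D, hD, rfl⟩ | ⟨D, hD, rfl⟩ := hx <;>
    obtain ⟨D', hD', hDD'⟩ | ⟨D', hD', hDD'⟩ := hy <;>
  · have hEq : D' = D := pm_inj_dom hDD'
    subst hEq
    rw [mem_erase_powerset] at hD hD'
    obtain ⟨a, ha⟩ := hD.1
    have := congrFun hDD' a
    simp only [pm, ha, if_true, Option.some.injEq] at this
    exact hkk' (add_left_cancel this).symm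

lemma geom_sum (N : ℕ) : ∑ j ∈ Finset.range N, 2 ^ j = 2 ^ N - 1 := by
  induction N with
  | zero => simp
  | succ N ih =>
    rw [Finset.sum_range_succ, ih]
    have h1 : 1 ≤ 2 ^ N := Nat.one_le_two_pow
    have h2 : 2 ^ (N + 1) = 2 ^ N * 2 := pow_succ 2 N
    omega

lemma arith (n : ℕ) (hn : 1 ≤ n) :
    1 + ∑ j ∈ Finset.range n, ((2 ^ (n - j) - 1) + (2 ^ j - 1)) =
      3 * 2 ^ n - 2 * n - 2 := by
  have hr : ∑ j ∈ Finset.range n, 2 ^ (n - j) = 2 ^ (n + 1) - 2 := by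
    have h1 : ∑ j ∈ Finset.range n, 2 ^ (n - j) =
        ∑ j ∈ Finset.range n, (fun i => 2 ^ (i + 1)) (n - 1 - j) := by
      apply Finset.sum_congr rfl
      intro j hj
      rw [Finset.mem_range] at hj
      congr 1
      omega
    rw [h1, Finset.sum_range_reflect (fun i => 2 ^ (i + 1)) n]
    have : ∑ j ∈ Finset.range n, 2 ^ (j + 1) = ∑ j ∈ Finset.range n, 2 * 2 ^ j := by
      apply Finset.sum_congr rfl; intro j _; ring
    rw [this, ← Finset.mul_sum, geom_sum]
    have h1 : 1 ≤ 2 ^ n := Nat.one_le_two_pow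
    have h2 : 2 ^ (n + 1) = 2 ^ n * 2 := pow_succ 2 n
    omega
  have hg := geom_sum n
  have key : (∑ j ∈ Finset.range n, ((2 ^ (n - j) - 1) + (2 ^ j - 1))) + 2 * n =
      (2 ^ (n + 1) - 2) + (2 ^ n - 1) := by
    rw [← hr, ← hg, ← Finset.sum_add_distrib]
    have : 2 * n = ∑ _j ∈ Finset.range n, 2 := by
      rw [Finset.sum_const, Finset.card_range, smul_eq_mul]; ring
    rw [this, ← Finset.sum_add_distrib]
    apply Finset.sum_congr rfl
    intro j hj
    rw [Finset.mem_range] at hj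
    have h1 : 1 ≤ 2 ^ (n - j) := Nat.one_le_two_pow
    have h2 : 1 ≤ 2 ^ j := Nat.one_le_two_pow
    omega
  have h1 : n < 2 ^ n := Nat.lt_two_pow_self
  have h2 : 2 ^ (n + 1) = 2 ^ n * 2 := pow_succ 2 n
  omega

lemma S_card :
    (S m).card = 1 + ∑ j ∈ Finset.range (m + 1),
      ((2 ^ (m + 1 - j) - 1) + (2 ^ j - 1)) := by
  rw [S, Finset.card_insert_of_notMem, Finset.card_biUnion]
  · rw [← Fin.sum_univ_eq_sum_range (fun j => (2 ^ (m + 1 - j) - 1) + (2 ^ j - 1)) (m + 1)]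
    rw [add_comm]
    congr 1
    apply Finset.sum_congr rfl
    intro k _
    rw [Finset.card_union_of_disjoint (low_high_disjoint k),
      Finset.card_image_of_injective _ (pm_injective k),
      Finset.card_image_of_injective _ (pm_injective k),
      Finset.card_erase_of_mem (Finset.empty_mem_powerset _),
      Finset.card_erase_of_mem (Finset.empty_mem_powerset _),
      Finset.card_powerset, Finset.card_powerset, lowSet_card, highSet_card]
  · intro k _ k' _ hkk'
    exact k_disjoint (Finset.mem_univ k) (Finset.mem_univ k') hkk'
  · intro h
    rw [Finset.mem_biUnion] at h
    obtain ⟨k, _, hk⟩ := h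
    rw [Finset.mem_union] at hk
    rcases hk with hk | hk <;>
    · obtain ⟨D, hD, hEq⟩ := Finset.mem_image.mp hk
      exact pm_ne_empty (mem_erase_powerset.mp hD).1 hEq

end OCIaux

/-- For `n ≥ 1`, the monoid `OCI_n` has exactly `3·2ⁿ - 2n - 2`
elements. -/
theorem OCIn.card (n : ℕ) (hn : 1 ≤ n) : (OCIn n).ncard = 3 * 2 ^ n - 2 * n - 2 := by
  obtain ⟨m, rfl⟩ : ∃ m, n = m + 1 := ⟨n - 1, by omega⟩
  rw [OCIaux.OCIn_eq_S, Set.ncard_coe_finset, OCIaux.S_card,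
    OCIaux.arith (m + 1) (by omega)]
end

section
/- For every n ≥ 1, the monoid CI_n is defined by the presentation ⟨A | R⟩; that is, CI_n is isomorphic as a monoid to the quotient of the free monoid on A by the smallest monoid congruence containing R. -/
/-! The alphabet `A = {g, e_1, …, e_n}` (with `n + 1` letters), modelled as
`Option (Fin n)`: `none` is the letter `g` and `some i` is the letter `e_{i+1}`. -/

/-- The free monoid on the alphabet `A = {g, e_1, …, e_n}`. -/
abbrev Aw (n : ℕ) := FreeMonoid (Option (Fin n))

/-- The letter `g`. -/
def Ag (n : ℕ) : Aw n := FreeMonoid.of none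

/-- The letter `e_{i+1}` (so `Ae ⟨0,_⟩ = e_1`, …, `Ae ⟨n-1,_⟩ = e_n`). -/
def Ae {n : ℕ} (i : Fin n) : Aw n := FreeMonoid.of (some i)

/-- The word `e_1 e_2 ⋯ e_n`. -/
def AeProd (n : ℕ) : Aw n := ((List.finRange n).map Ae).prod

/-- The set `R` of relations of the paper (in `0`-based indexing of the letters `e`):
`(R_1) gⁿ = 1`; `(R_2) e_i² = e_i`; `(R_3) e_i e_j = e_j e_i` for `i < j`;
`(R_4) g e_1 = e_n g` and `g e_{i+1} = e_i g` for `1 ≤ i ≤ n-1`;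
`(R_5) g e_1 ⋯ e_n = e_1 ⋯ e_n`. -/
inductive Rrel (n : ℕ) : Aw n → Aw n → Prop
  | r1 : Rrel n (Ag n ^ n) 1
  | r2 (i : Fin n) : Rrel n (Ae i * Ae i) (Ae i)
  | r3 (i j : Fin n) : i < j → Rrel n (Ae i * Ae j) (Ae j * Ae i)
  | r4a (i j : Fin n) : (i : ℕ) = 0 → (j : ℕ) = n - 1 →
      Rrel n (Ag n * Ae i) (Ae j * Ag n)
  | r4b (i j : Fin n) : (i : ℕ) + 1 = (j : ℕ) →
      Rrel n (Ag n * Ae j) (Ae i * Ag n)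
  | r5 : Rrel n (Ag n * AeProd n) (AeProd n)


namespace CInPres

open Fin.NatCast

theorem pmul_apply {n : ℕ} (f g : PMap n) (a : Fin n) : (f * g) a = (f a).bind g := rfl

theorem pone_apply {n : ℕ} (a : Fin n) : (1 : PMap n) a = some a := rfl

theorem emap_bind {n : ℕ} (i : ℕ) (f : PMap n) (a : Fin n) :
    (emap n i a).bind f = if (a:ℕ)+1 = i then none else f a := by
  unfold emap; split <;> rfl

/-- The generator map. -/
def fgen (n : ℕ) : Option (Fin n) → PMap n
  | none => gmap n
  | some i => emap n ((i : ℕ) + 1)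

/-- The evaluation homomorphism on the free monoid. -/
def phi0 (n : ℕ) : Aw n →* PMap n := FreeMonoid.lift (fgen n)

theorem phi0_g (n : ℕ) : phi0 n (Ag n) = gmap n := rfl

theorem phi0_e {n : ℕ} (i : Fin n) : phi0 n (Ae i) = emap n ((i : ℕ) + 1) := rfl

/-- `El l` is the word `∏_{i ∈ l} e_{i+1}`. -/
def El {n : ℕ} (l : List (Fin n)) : Aw n := (l.map Ae).prod

theorem El_nil {n : ℕ} : El ([] : List (Fin n)) = 1 := rfl

theorem El_cons {n : ℕ} (a : Fin n) (l : List (Fin n)) : El (a :: l) = Ae a * El l := by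
  simp [El]

theorem AeProd_eq (n : ℕ) : AeProd n = El (List.finRange n) := rfl

theorem phi0_El {n : ℕ} (l : List (Fin n)) :
    phi0 n (El l) = fun a => if a ∈ l then none else some a := by
  induction l with
  | nil => rw [El_nil, map_one]; funext a; simp [pone_apply]
  | cons b t ih =>
    rw [El_cons, map_mul, phi0_e, ih]
    funext a
    rw [pmul_apply]
    by_cases h : a = b
    · subst h; simp [emap]
    · have h' : ¬ ((a:ℕ)+1 = (b:ℕ)+1) := by
        simpa [Fin.ext_iff] using h
      simp [emap, h', h, Fin.val_inj]

theorem gmap_pow_apply (m k : ℕ) (a : Fin (m+1)) :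
    (gmap (m+1) ^ k) a = some (a + (k : Fin (m+1))) := by
  induction k with
  | zero => simp [pow_zero, pone_apply]
  | succ k ih =>
    rw [pow_succ, pmul_apply, ih]
    show some (finRotate (m+1) (a + (k : Fin (m+1)))) = _
    rw [finRotate_succ_apply, add_assoc]
    congr 1
    push_cast
    ring

theorem rot_val (m : ℕ) (a : Fin (m+1)) :
    ((finRotate (m+1) a : Fin (m+1)) : ℕ) = (a.val + 1) % (m+1) := by
  rw [finRotate_succ_apply, Fin.add_def, Fin.val_one']
  rw [Nat.add_mod a.val 1, Nat.mod_eq_of_lt a.isLt]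

theorem eval_gAe {n : ℕ} (j : Fin n) (a : Fin n) :
    phi0 n (Ag n * Ae j) a
      = if ((finRotate n a : Fin n) : ℕ) + 1 = (j:ℕ)+1 then none else some (finRotate n a) := by
  rw [map_mul, phi0_g, phi0_e, pmul_apply]
  rfl

theorem eval_eAg {n : ℕ} (i : Fin n) (a : Fin n) :
    phi0 n (Ae i * Ag n) a
      = if (a:ℕ)+1 = (i:ℕ)+1 then none else some (finRotate n a) := by
  rw [map_mul, phi0_e, phi0_g, pmul_apply]
  by_cases h : (a:ℕ)+1 = (i:ℕ)+1 <;> simp_all [emap, gmap]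

theorem mod_cases (m : ℕ) (a : Fin (m+1)) :
    (a.val + 1) % (m+1) = 0 ∧ a.val = m ∨ (a.val+1) % (m+1) = a.val+1 ∧ a.val < m := by
  rcases eq_or_lt_of_le (Nat.lt_succ_iff.mp a.isLt) with h | h
  · left; exact ⟨by rw [h]; exact Nat.mod_self _, h⟩
  · right; exact ⟨Nat.mod_eq_of_lt (by omega), h⟩

theorem rel_ker (m : ℕ) : ∀ a b, Rrel (m+1) a b → phi0 (m+1) a = phi0 (m+1) b := by
  intro a b h
  induction h with
  | r1 =>
    rw [map_pow, map_one, phi0_g]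
    funext a
    rw [gmap_pow_apply, Fin.natCast_self, add_zero, pone_apply]
  | r2 i =>
    rw [map_mul, phi0_e]
    funext a
    rw [pmul_apply, emap_bind]
    unfold emap
    by_cases h : (a:ℕ)+1 = (i:ℕ)+1 <;> simp [h]
  | r3 i j _ =>
    rw [map_mul, map_mul, phi0_e, phi0_e]
    funext a
    rw [pmul_apply, pmul_apply, emap_bind, emap_bind]
    unfold emap
    by_cases h1 : (a:ℕ)+1 = (i:ℕ)+1 <;> by_cases h2 : (a:ℕ)+1 = (j:ℕ)+1 <;>
      simp_all
  | r4a i j hi hj =>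
    funext a
    rw [eval_gAe, eval_eAg]
    have hm := mod_cases m a
    have hrv := rot_val m a
    have hj' : (j:ℕ) = m := hj
    have hiff : (((finRotate (m+1) a : Fin (m+1)) : ℕ) + 1 = (i:ℕ)+1) ↔ ((a:ℕ)+1 = (j:ℕ)+1) := by
      rw [hrv]; omega
    simp only [hiff]
  | r4b i j hij =>
    funext a
    rw [eval_gAe, eval_eAg]
    have hm := mod_cases m a
    have hrv := rot_val m a
    have hjlt := j.isLt
    have hiff : (((finRotate (m+1) a : Fin (m+1)) : ℕ) + 1 = (j:ℕ)+1) ↔ ((a:ℕ)+1 = (i:ℕ)+1) := by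
      rw [hrv]; omega
    simp only [hiff]
  | r5 =>
    rw [map_mul, AeProd_eq, phi0_El, phi0_g]
    funext a
    rw [pmul_apply]
    simp [gmap, List.mem_finRange]

/-- Abbreviation for the congruence generated by `Rrel n`. -/
abbrev cg (n : ℕ) : Con (Aw n) := conGen (Rrel n)

theorem cg_of {n : ℕ} {a b : Aw n} (h : Rrel n a b) : cg n a b :=
  ConGen.Rel.of a b h

theorem ecomm {n : ℕ} (i j : Fin n) : cg n (Ae i * Ae j) (Ae j * Ae i) := by
  rcases lt_trichotomy i j with h | rfl | h
  · exact cg_of (Rrel.r3 i j h)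
  · exact (cg n).refl _
  · exact (cg n).symm (cg_of (Rrel.r3 j i h))

theorem comm_El {n : ℕ} (i : Fin n) (l : List (Fin n)) :
    cg n (Ae i * El l) (El l * Ae i) := by
  induction l with
  | nil => rw [El_nil, mul_one, one_mul]; exact (cg n).refl _
  | cons a t ih =>
    rw [El_cons, ← mul_assoc]
    have h1 : cg n ((Ae i * Ae a) * El t) ((Ae a * Ae i) * El t) :=
      (cg n).mul (ecomm i a) ((cg n).refl _)
    have h2 : cg n (Ae a * (Ae i * El t)) (Ae a * (El t * Ae i)) :=
      (cg n).mul ((cg n).refl _) ih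
    rw [← mul_assoc] at h2
    refine h1.trans (h2.trans ?_)
    rw [mul_assoc]
    exact (cg n).refl _

theorem absorbL {n : ℕ} (i : Fin n) (l : List (Fin n)) (hi : i ∈ l) :
    cg n (Ae i * El l) (El l) := by
  induction l with
  | nil => simp at hi
  | cons a t ih =>
    rw [El_cons]
    rcases List.mem_cons.mp hi with rfl | hm
    · rw [← mul_assoc]
      exact (cg n).mul (cg_of (Rrel.r2 i)) ((cg n).refl _)
    · have h1 : cg n ((Ae i * Ae a) * El t) ((Ae a * Ae i) * El t) :=
        (cg n).mul (ecomm i a) ((cg n).refl _)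
      rw [← mul_assoc]
      refine h1.trans ?_
      rw [mul_assoc]
      exact (cg n).mul ((cg n).refl _) (ih hm)

theorem absorbR {n : ℕ} (i : Fin n) (l : List (Fin n)) (hi : i ∈ l) :
    cg n (El l * Ae i) (El l) :=
  ((comm_El i l).symm).trans (absorbL i l hi)

theorem subsetR {n : ℕ} (l m' : List (Fin n)) (h : ∀ x ∈ l, x ∈ m') :
    cg n (El m' * El l) (El m') := by
  induction l with
  | nil => rw [El_nil, mul_one]; exact (cg n).refl _
  | cons a t ih =>
    rw [El_cons, ← mul_assoc]
    exact ((cg n).mul (absorbR a m' (h a (List.mem_cons_self))) ((cg n).refl _)).trans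
      (ih fun x hx => h x (List.mem_cons_of_mem a hx))

theorem subsetL {n : ℕ} (l m' : List (Fin n)) (h : ∀ x ∈ l, x ∈ m') :
    cg n (El l * El m') (El m') := by
  induction l with
  | nil => rw [El_nil, one_mul]; exact (cg n).refl _
  | cons a t ih =>
    rw [El_cons, mul_assoc]
    exact ((cg n).mul ((cg n).refl _) (ih fun x hx => h x (List.mem_cons_of_mem a hx))).trans
      (absorbL a m' (h a (List.mem_cons_self)))

theorem sameset {n : ℕ} (l l' : List (Fin n)) (h : ∀ x, x ∈ l ↔ x ∈ l') :
    cg n (El l) (El l') :=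
  ((subsetR l' l fun x hx => (h x).mpr hx).symm).trans
    (subsetL l l' fun x hx => (h x).mp hx)

theorem shift1 (m : ℕ) (i : Fin (m+1)) :
    cg (m+1) (Ae i * Ag (m+1)) (Ag (m+1) * Ae (finRotate (m+1) i)) := by
  by_cases hi : (i:ℕ) = m
  · have h0 : ((finRotate (m+1) i : Fin (m+1)) : ℕ) = 0 := by
      rw [rot_val, hi]; exact Nat.mod_self _
    exact ((cg (m+1)).symm (cg_of (Rrel.r4a (finRotate (m+1) i) i h0 hi)))
  · have hlt : (i:ℕ) < m := lt_of_le_of_ne (Nat.lt_succ_iff.mp i.isLt) hi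
    have hval : ((finRotate (m+1) i : Fin (m+1)) : ℕ) = (i:ℕ)+1 := by
      rw [rot_val]; exact Nat.mod_eq_of_lt (by omega)
    exact ((cg (m+1)).symm (cg_of (Rrel.r4b i (finRotate (m+1) i) hval.symm)))

theorem shiftPow (m k : ℕ) (i : Fin (m+1)) :
    cg (m+1) (Ae i * Ag (m+1)^k) (Ag (m+1)^k * Ae ((finRotate (m+1))^[k] i)) := by
  induction k with
  | zero => rw [pow_zero, mul_one, one_mul, Function.iterate_zero_apply]; exact (cg _).refl _
  | succ k ih =>
    rw [pow_succ, ← mul_assoc]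
    refine ((cg _).mul ih ((cg _).refl _)).trans ?_
    rw [mul_assoc, mul_assoc]
    refine (cg _).mul ((cg _).refl _) ?_
    rw [Function.iterate_succ_apply']
    exact shift1 m _

theorem gfull (m : ℕ) (l : List (Fin (m+1))) (hl : ∀ x, x ∈ l) :
    cg (m+1) (Ag (m+1) * El l) (El l) := by
  have hs : cg (m+1) (El l) (El (List.finRange (m+1))) :=
    sameset _ _ fun x => by simp [hl x, List.mem_finRange]
  refine ((cg _).mul ((cg _).refl _) hs).trans ?_
  have h5 : cg (m+1) (Ag (m+1) * El (List.finRange (m+1))) (El (List.finRange (m+1))) := by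
    rw [← AeProd_eq]; exact cg_of Rrel.r5
  exact h5.trans hs.symm

theorem gpowfull (m k : ℕ) (l : List (Fin (m+1))) (hl : ∀ x, x ∈ l) :
    cg (m+1) (Ag (m+1)^k * El l) (El l) := by
  induction k with
  | zero => rw [pow_zero, one_mul]; exact (cg _).refl _
  | succ k ih =>
    rw [pow_succ', mul_assoc]
    exact ((cg _).mul ((cg _).refl (Ag (m+1))) ih).trans (gfull m l hl)

theorem exists_nf (m : ℕ) (w : Aw (m+1)) :
    ∃ k, k < m+1 ∧ ∃ l : List (Fin (m+1)),
      ((∀ x, x ∈ l) → k = 0) ∧ cg (m+1) w (Ag (m+1)^k * El l) := by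
  induction w using FreeMonoid.inductionOn' with
  | one =>
    refine ⟨0, Nat.succ_pos m, [], fun _ => rfl, ?_⟩
    rw [pow_zero, El_nil, one_mul]
    exact (cg _).refl _
  | of_mul b w ih =>
    obtain ⟨k, hk, l, hfull, hc⟩ := ih
    match b with
    | some i =>
      have step : cg (m+1) (Ae i * w) (Ag (m+1)^k * El ((finRotate (m+1))^[k] i :: l)) := by
        refine ((cg _).mul ((cg _).refl (Ae i)) hc).trans ?_
        rw [← mul_assoc]
        refine ((cg _).mul (shiftPow m k i) ((cg _).refl (El l))).trans ?_
        rw [mul_assoc, El_cons]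
        exact (cg _).refl _
      by_cases hful : ∀ x, x ∈ (finRotate (m+1))^[k] i :: l
      · refine ⟨0, Nat.succ_pos m, (finRotate (m+1))^[k] i :: l, fun _ => rfl, ?_⟩
        rw [pow_zero, one_mul]
        exact step.trans (gpowfull m k _ hful)
      · exact ⟨k, hk, (finRotate (m+1))^[k] i :: l, fun h => absurd h hful, step⟩
    | none =>
      by_cases hful : ∀ x, x ∈ l
      · have hk0 := hfull hful
        subst hk0
        refine ⟨0, Nat.succ_pos m, l, fun _ => rfl, ?_⟩
        rw [pow_zero, one_mul] at hc ⊢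
        exact ((cg _).mul ((cg _).refl (Ag (m+1))) hc).trans (gfull m l hful)
      · have step : cg (m+1) (Ag (m+1) * w) (Ag (m+1)^(k+1) * El l) := by
          rw [pow_succ', mul_assoc]
          exact (cg _).mul ((cg _).refl _) hc
        rcases Nat.lt_or_ge (k+1) (m+1) with h | h
        · exact ⟨k+1, h, l, fun hfl => absurd hfl hful, step⟩
        · have hkeq : k + 1 = m + 1 := by omega
          refine ⟨0, Nat.succ_pos m, l, fun _ => rfl, ?_⟩
          rw [pow_zero, one_mul]
          refine step.trans ?_
          rw [hkeq]
          have h1 := (cg (m+1)).mul (cg_of (Rrel.r1 (n := m+1))) ((cg (m+1)).refl (El l))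
          rwa [one_mul] at h1

theorem nf_eval (m k : ℕ) (l : List (Fin (m+1))) (a : Fin (m+1)) :
    phi0 (m+1) (Ag (m+1)^k * El l) a
      = if a + (k : Fin (m+1)) ∈ l then none else some (a + (k : Fin (m+1))) := by
  rw [map_mul, map_pow, phi0_g, phi0_El, pmul_apply, gmap_pow_apply]
  rfl

theorem nf_unique (m : ℕ) {k1 k2 : ℕ} (hk1 : k1 < m+1) (hk2 : k2 < m+1)
    {l1 l2 : List (Fin (m+1))} (hf1 : (∀ x, x ∈ l1) → k1 = 0) (hf2 : (∀ x, x ∈ l2) → k2 = 0)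
    (h : phi0 (m+1) (Ag (m+1)^k1 * El l1) = phi0 (m+1) (Ag (m+1)^k2 * El l2)) :
    k1 = k2 ∧ ∀ x, x ∈ l1 ↔ x ∈ l2 := by
  have he : ∀ a : Fin (m+1),
      (if a + (k1 : Fin (m+1)) ∈ l1 then none else some (a + (k1 : Fin (m+1))))
        = (if a + (k2 : Fin (m+1)) ∈ l2 then none else some (a + (k2 : Fin (m+1)))) := by
    intro a; rw [← nf_eval, ← nf_eval, h]
  have hfulliff : (∀ x, x ∈ l1) ↔ (∀ x, x ∈ l2) := by
    constructor
    · intro h1 x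
      have hx := he (x - (k2 : Fin (m+1)))
      rw [sub_add_cancel, if_pos (h1 _)] at hx
      by_contra hc
      rw [if_neg hc] at hx
      exact nomatch hx
    · intro h2 x
      have hx := he (x - (k1 : Fin (m+1)))
      rw [sub_add_cancel, if_pos (h2 _)] at hx
      by_contra hc
      rw [if_neg hc] at hx
      exact nomatch hx
  by_cases hful : ∀ x, x ∈ l1
  · have hful2 : ∀ x, x ∈ l2 := hfulliff.mp hful
    exact ⟨(hf1 hful).trans (hf2 hful2).symm, fun x => iff_of_true (hful x) (hful2 x)⟩
  · push_neg at hful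
    obtain ⟨x0, hx0⟩ := hful
    have h1 := he (x0 - (k1 : Fin (m+1)))
    rw [sub_add_cancel, if_neg hx0] at h1
    have hkk : (k1 : Fin (m+1)) = (k2 : Fin (m+1)) := by
      by_cases hmm : x0 - (k1 : Fin (m+1)) + (k2 : Fin (m+1)) ∈ l2
      · rw [if_pos hmm] at h1; exact nomatch h1
      · rw [if_neg hmm] at h1
        have h2 := Option.some.inj h1
        have h3 : x0 - (k1 : Fin (m+1)) + (k1 : Fin (m+1))
            = x0 - (k1 : Fin (m+1)) + (k2 : Fin (m+1)) := by
          conv_lhs => rw [sub_add_cancel]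
          exact h2
        exact add_left_cancel h3
    have hk12 : k1 = k2 := by
      have hv : k1 % (m+1) = k2 % (m+1) := by
        have h4 := congrArg Fin.val hkk
        rwa [Fin.val_natCast, Fin.val_natCast] at h4
      rwa [Nat.mod_eq_of_lt hk1, Nat.mod_eq_of_lt hk2] at hv
    refine ⟨hk12, fun x => ?_⟩
    have h2 := he (x - (k1 : Fin (m+1)))
    rw [sub_add_cancel, ← hkk, sub_add_cancel] at h2
    constructor
    · intro hx
      by_contra hx2
      rw [if_pos hx, if_neg hx2] at h2
      exact nomatch h2
    · intro hx
      by_contra hx2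
      rw [if_neg hx2, if_pos hx] at h2
      exact nomatch h2

theorem one_mem_CIn (n : ℕ) : (1 : PMap n) ∈ CIn n :=
  ⟨0, fun _ _ => by rw [pow_zero]⟩

theorem gmap_mem_CIn (n : ℕ) : gmap n ∈ CIn n :=
  ⟨1, fun _ _ => by rw [pow_one]⟩

theorem emap_mem_CIn (n i : ℕ) : emap n i ∈ CIn n := by
  refine ⟨0, fun a ha => ?_⟩
  rw [pow_zero, pone_apply]
  unfold emap at ha ⊢
  split at ha
  · exact absurd rfl ha
  · split
    · simp_all
    · rfl

theorem mul_mem_CIn {n : ℕ} {f g : PMap n} (hf : f ∈ CIn n) (hg : g ∈ CIn n) :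
    f * g ∈ CIn n := by
  obtain ⟨k1, h1⟩ := hf
  obtain ⟨k2, h2⟩ := hg
  refine ⟨k1 + k2, fun a ha => ?_⟩
  rw [pmul_apply] at ha ⊢
  obtain ⟨b, hfa⟩ : ∃ b, f a = some b := by
    cases hfb : f a with
    | none => rw [hfb] at ha; simp at ha
    | some b => exact ⟨b, rfl⟩
  have hfa' : f a = (gmap n ^ k1) a := h1 a (by rw [hfa]; simp)
  rw [hfa] at ha ⊢
  have hgb : g b = (gmap n ^ k2) b := h2 b (by simpa using ha)
  rw [pow_add, pmul_apply, ← hfa', hfa]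
  simpa using hgb

theorem phi0_mem_CIn (n : ℕ) (w : Aw n) : phi0 n w ∈ CIn n := by
  induction w using FreeMonoid.inductionOn' with
  | one => rw [map_one]; exact one_mem_CIn n
  | of_mul b w ih =>
    rw [map_mul]
    refine mul_mem_CIn ?_ ih
    match b with
    | none => exact gmap_mem_CIn n
    | some i => exact emap_mem_CIn n _

theorem mem_CIn_exists_word (m : ℕ) {f : PMap (m+1)} (hf : f ∈ CIn (m+1)) :
    ∃ w : Aw (m+1), phi0 (m+1) w = f := by
  obtain ⟨k, hk⟩ := hf
  refine ⟨Ag (m+1)^k *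
    El (((List.finRange (m+1)).filter fun b => decide (f b = none)).map
      fun b => b + (k : Fin (m+1))), ?_⟩
  funext a
  rw [nf_eval]
  have hmem : (a + (k : Fin (m+1)) ∈
      ((List.finRange (m+1)).filter fun b => decide (f b = none)).map
        fun b => b + (k : Fin (m+1))) ↔ f a = none := by
    simp only [List.mem_map, List.mem_filter, List.mem_finRange, true_and,
      decide_eq_true_eq]
    constructor
    · rintro ⟨b, hb, hba⟩
      have hba' : b = a := add_right_cancel hba
      rwa [← hba']
    · intro h; exact ⟨a, h, rfl⟩
  by_cases h : f a = none
  · rw [if_pos (hmem.mpr h), h]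
  · rw [if_neg fun hc => h (hmem.mp hc), hk a h, gmap_pow_apply]

end CInPres

open CInPres in
/-- For `n ≥ 1`, the monoid `CI_n` is defined by the presentation
`⟨A | R⟩`: the quotient of the free monoid on `A = {g, e_1, …, e_n}` by the smallest
congruence containing `R` is isomorphic to `CI_n` (an injective monoid homomorphism
onto the set `CI_n`). -/
theorem CIn.presentation (n : ℕ) (hn : 1 ≤ n) :
    ∃ φ : (conGen (Rrel n)).Quotient →* PMap n,
      Function.Injective φ ∧ Set.range φ = CIn n := by
  obtain ⟨m, rfl⟩ : ∃ m, n = m + 1 := ⟨n - 1, by omega⟩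
  have hker : conGen (Rrel (m+1)) ≤ Con.ker (phi0 (m+1)) :=
    Con.conGen_le.mpr fun a b h => (Con.ker_rel _).mpr (rel_ker m a b h)
  refine ⟨(conGen (Rrel (m+1))).lift (phi0 (m+1)) hker, ?_, ?_⟩
  · intro x y hxy
    obtain ⟨w1, rfl⟩ := Con.mk'_surjective x
    obtain ⟨w2, rfl⟩ := Con.mk'_surjective y
    rw [Con.lift_mk', Con.lift_mk'] at hxy
    obtain ⟨k1, hk1, l1, hf1, hc1⟩ := exists_nf m w1
    obtain ⟨k2, hk2, l2, hf2, hc2⟩ := exists_nf m w2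
    have e1 : phi0 (m+1) w1 = phi0 (m+1) (Ag (m+1)^k1 * El l1) :=
      (Con.ker_rel _).mp (hker hc1)
    have e2 : phi0 (m+1) w2 = phi0 (m+1) (Ag (m+1)^k2 * El l2) :=
      (Con.ker_rel _).mp (hker hc2)
    obtain ⟨rfl, hll⟩ := nf_unique m hk1 hk2 hf1 hf2 (by rw [← e1, ← e2, hxy])
    have hcc : cg (m+1) w1 w2 :=
      hc1.trans ((((cg _).mul ((cg _).refl (Ag (m+1)^k1)) (sameset l1 l2 hll))).trans hc2.symm)
    exact ((conGen (Rrel (m+1))).eq).mpr hcc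
  · ext f
    constructor
    · rintro ⟨x, rfl⟩
      obtain ⟨w, rfl⟩ := Con.mk'_surjective x
      rw [Con.lift_mk']
      exact phi0_mem_CIn _ w
    · intro hf
      obtain ⟨w, hw⟩ := mem_CIn_exists_word m hf
      exact ⟨Con.mk' _ w, by rw [Con.lift_mk', hw]⟩
end

section
/- Let u be any word in the free monoid A* on the alphabet A = {g, e_1, …, e_n}. Then there exist m ∈ {0, 1, …, n−1}, k with 0 ≤ k ≤ n, and indices 1 ≤ i_1 < ⋯ < i_k ≤ n such that u and g^m e_{i_1} ⋯ e_{i_k} are related by the smallest monoid congruence on A* containing the relations R_1 through R_4. -/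
/-- The relations `R_1` to `R_4` of the paper (in `0`-based indexing of the letters `e`):
`(R_1) gⁿ = 1`; `(R_2) e_i² = e_i`; `(R_3) e_i e_j = e_j e_i` for `i < j`;
`(R_4) g e_1 = e_n g` and `g e_{i+1} = e_i g` for `1 ≤ i ≤ n-1`. -/
inductive Rrel14 (n : ℕ) : Aw n → Aw n → Prop
  | r1 : Rrel14 n (Ag n ^ n) 1
  | r2 (i : Fin n) : Rrel14 n (Ae i * Ae i) (Ae i)
  | r3 (i j : Fin n) : i < j → Rrel14 n (Ae i * Ae j) (Ae j * Ae i)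
  | r4a (i j : Fin n) : (i : ℕ) = 0 → (j : ℕ) = n - 1 →
      Rrel14 n (Ag n * Ae i) (Ae j * Ag n)
  | r4b (i j : Fin n) : (i : ℕ) + 1 = (j : ℕ) →
      Rrel14 n (Ag n * Ae j) (Ae i * Ag n)

namespace NF
variable {n : ℕ}

def fsucc (i : Fin n) : Fin n := ⟨((i : ℕ) + 1) % n, Nat.mod_lt _ i.pos⟩

def ins (i : Fin n) : List (Fin n) → List (Fin n)
  | [] => [i]
  | j :: l => if i < j then i :: j :: l else if i = j then j :: l else j :: ins i l

theorem ins_head? (i : Fin n) (l : List (Fin n)) :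
    (ins i l).head? = some i ∨ (ins i l).head? = l.head? := by
  cases l with
  | nil => left; rfl
  | cons j l =>
    by_cases h1 : i < j
    · left; simp [ins, h1]
    · by_cases h2 : i = j
      · right; simp [ins, h1, h2]
      · right; simp [ins, h1, h2]

theorem ins_chain (i : Fin n) (l : List (Fin n)) (h : l.Chain' (· < ·)) :
    (ins i l).Chain' (· < ·) := by
  unfold List.Chain' at h ⊢
  induction l with
  | nil => simp [ins]
  | cons j l ih =>
    rw [List.isChain_cons] at h
    by_cases h1 : i < j
    · simp only [ins, h1, if_true]
      rw [List.isChain_cons]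
      refine ⟨?_, List.isChain_cons.2 h⟩
      intro y hy; simp at hy; omega
    · by_cases h2 : i = j
      · simpa [ins, h1, h2] using List.isChain_cons.2 h
      · have hji : j < i := by
          rcases lt_trichotomy i j with h | h | h <;> simp_all
        simp only [ins, h1, h2, if_false]
        rw [List.isChain_cons]
        refine ⟨?_, ih h.2⟩
        intro y hy
        rcases ins_head? i l with hh | hh
        · rw [hh] at hy; simp at hy; omega
        · rw [hh] at hy; exact h.1 y hy

variable (n)

abbrev C := conGen (Rrel14 n)

variable {n}

theorem step_g (i : Fin n) : C n (Ae i * Ag n) (Ag n * Ae (fsucc i)) := by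
  by_cases h : (i : ℕ) = n - 1
  · refine (ConGen.Rel.of _ _ (Rrel14.r4a (fsucc i) i ?_ h)).symm
    have hp := i.pos
    have h1 : n - 1 + 1 = n := by omega
    simp [fsucc, h, h1]
  · refine (ConGen.Rel.of _ _ (Rrel14.r4b i (fsucc i) ?_)).symm
    have h2 := i.2
    simp [fsucc]
    rw [Nat.mod_eq_of_lt] <;> omega

theorem step_gpow (i : Fin n) (m : ℕ) :
    C n (Ae i * Ag n ^ m) (Ag n ^ m * Ae (fsucc^[m] i)) := by
  induction m generalizing i with
  | zero => simpa using (C n).refl _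
  | succ m ih =>
    have h1 : C n (Ae i * Ag n ^ (m+1)) ((Ag n * Ae (fsucc i)) * Ag n ^ m) := by
      rw [pow_succ']
      calc Ae i * (Ag n * Ag n ^ m) = (Ae i * Ag n) * Ag n ^ m := by rw [mul_assoc]
        _ = _ := rfl
      exact (C n).mul (step_g i) ((C n).refl _)
    refine h1.trans ?_
    rw [mul_assoc]
    have h2 := (C n).mul ((C n).refl (Ag n)) (ih (fsucc i))
    refine h2.trans ?_
    rw [← mul_assoc, ← pow_succ', Function.iterate_succ_apply]
    exact (C n).refl _

theorem step_ins (i : Fin n) (l : List (Fin n)) :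
    C n (Ae i * (l.map Ae).prod) (((ins i l).map Ae).prod) := by
  induction l with
  | nil => simp [ins]; exact (C n).refl _
  | cons j l ih =>
    by_cases h1 : i < j
    · simp only [ins, h1, if_true]
      exact (C n).refl _
    · by_cases h2 : i = j
      · subst h2
        simp only [ins, h1, if_true, lt_irrefl, if_false, if_pos rfl, List.map_cons,
          List.prod_cons, ← mul_assoc]
        exact (C n).mul (ConGen.Rel.of _ _ (Rrel14.r2 i)) ((C n).refl _)
      · have hji : j < i := by rcases lt_trichotomy i j with h | h | h <;> simp_all
        simp only [ins, h1, h2, if_false, List.map_cons, List.prod_cons, ← mul_assoc]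
        have h3 : C n (Ae i * Ae j) (Ae j * Ae i) :=
          (ConGen.Rel.of _ _ (Rrel14.r3 j i hji)).symm
        refine ((C n).mul h3 ((C n).refl _)).trans ?_
        rw [mul_assoc]
        exact (C n).mul ((C n).refl _) ih

end NF

/-- Every word `u` over the alphabet `A = {g, e_1, …, e_n}` is related,
by the smallest monoid congruence containing the relations `R_1`–`R_4`, to a word
`g^m e_{i_1} ⋯ e_{i_k}` with `0 ≤ m ≤ n-1` and `i_1 < ⋯ < i_k` (the strictly increasing
list `l` of indices has length `k ≤ n` automatically). -/


theorem Rrel14.normal_form (n : ℕ) (hn : 1 ≤ n) (u : Aw n) :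
    ∃ (m : ℕ) (l : List (Fin n)), m < n ∧ l.Chain' (· < ·) ∧
      conGen (Rrel14 n) u (Ag n ^ m * (l.map Ae).prod) := by
  induction u using FreeMonoid.inductionOn' with
  | one => exact ⟨0, [], hn, by simp [List.Chain'], by simpa using (NF.C n).refl 1⟩
  | of_mul a u ih =>
    obtain ⟨m, l, hm, hl, hu⟩ := ih
    cases a with
    | none =>
      have h1 : conGen (Rrel14 n) (FreeMonoid.of none * u)
          (Ag n ^ (m+1) * (l.map Ae).prod) := by
        have := (NF.C n).mul ((NF.C n).refl (Ag n)) hu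
        rw [← mul_assoc, ← pow_succ'] at this
        exact this
      by_cases h : m + 1 < n
      · exact ⟨m + 1, l, h, hl, h1⟩
      · have hmn : m + 1 = n := by omega
        refine ⟨0, l, hn, hl, h1.trans ?_⟩
        rw [hmn, pow_zero]
        exact (NF.C n).mul (ConGen.Rel.of _ _ Rrel14.r1) ((NF.C n).refl _)
    | some i =>
      refine ⟨m, NF.ins (NF.fsucc^[m] i) l, hm, NF.ins_chain _ _ hl, ?_⟩
      have h1 : conGen (Rrel14 n) (FreeMonoid.of (some i) * u)
          (Ae i * (Ag n ^ m * (l.map Ae).prod)) :=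
        (NF.C n).mul ((NF.C n).refl (Ae i)) hu
      refine h1.trans ?_
      rw [← mul_assoc]
      refine ((NF.C n).mul (NF.step_gpow i m) ((NF.C n).refl _)).trans ?_
      rw [mul_assoc]
      exact (NF.C n).mul ((NF.C n).refl _) (NF.step_ins _ _)
end

section
/- In the free monoid C* on the alphabet C = {x, y, e_1, …, e_n}, the relations e_{i+1} y = y e_i, for 1 ≤ i ≤ n−1, are consequences of the relations U_2 through U_5. -/
/-! The alphabet `C = {x, y, e_1, …, e_n}` (with `n + 2` letters), modelled as
`Bool ⊕ Fin n`: `.inl false` is the letter `x`, `.inl true` is the letter `y`,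
and `.inr i` is the letter `e_{i+1}`. -/

/-- The free monoid on the alphabet `C = {x, y, e_1, …, e_n}`. -/
abbrev Cw (n : ℕ) := FreeMonoid (Bool ⊕ Fin n)

/-- The letter `x`. -/
def Cx (n : ℕ) : Cw n := FreeMonoid.of (Sum.inl false)

/-- The letter `y`. -/
def Cy (n : ℕ) : Cw n := FreeMonoid.of (Sum.inl true)

/-- The letter `e_{i+1}` (so `Ce ⟨0,_⟩ = e_1`, …, `Ce ⟨n-1,_⟩ = e_n`). -/
def Ce {n : ℕ} (i : Fin n) : Cw n := FreeMonoid.of (Sum.inr i)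

/-- The word `e_1 e_2 ⋯ e_n`. -/
def CeProd (n : ℕ) : Cw n := ((List.finRange n).map Ce).prod

/-- The word `e_2 ⋯ e_n`. -/
def CeProdTail (n : ℕ) : Cw n := (((List.finRange n).drop 1).map Ce).prod

/-- The relations `U_2` to `U_5` of the paper (in `0`-based indexing of the letters `e`):
`(U_2) xy = e_n` and `yx = e_1`; `(U_3) x e_1 = x` and `e_1 y = y`;
`(U_4) e_i e_j = e_j e_i` for `i < j`; `(U_5) x e_{i+1} = e_i x` for `1 ≤ i ≤ n-1`. -/
inductive Urel2345 (n : ℕ) : Cw n → Cw n → Prop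
  | u2a (j : Fin n) : (j : ℕ) = n - 1 → Urel2345 n (Cx n * Cy n) (Ce j)
  | u2b (i : Fin n) : (i : ℕ) = 0 → Urel2345 n (Cy n * Cx n) (Ce i)
  | u3a (i : Fin n) : (i : ℕ) = 0 → Urel2345 n (Cx n * Ce i) (Cx n)
  | u3b (i : Fin n) : (i : ℕ) = 0 → Urel2345 n (Ce i * Cy n) (Cy n)
  | u4 (i j : Fin n) : i < j → Urel2345 n (Ce i * Ce j) (Ce j * Ce i)
  | u5 (i j : Fin n) : (i : ℕ) + 1 = (j : ℕ) → Urel2345 n (Cx n * Ce j) (Ce i * Cx n)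

/-! If `y x y = y`, then `y` carries the relation `x a = b x` back to `a y = y b` as soon as
`a` commutes with `y x` and `b` with `x y`:
`a y = a (y x) y = y (x a) y = y b (x y) = (y x y) b = y b`.
In the quotient by `U_2`–`U_5` we have `y x y = e_1 y = y`, `y x = e_1` and `x y = e_n`,
and the `e_j` commute with each other by `U_4`, so `U_5` gives `e_{i+1} y = y e_i`. -/

theorem SemiconjBy.of_mul_mul_eq_self {M : Type*} [Monoid M] {x y a b : M}
    (h : SemiconjBy x a b) (hy : y * x * y = y) (ha : Commute a (y * x))
    (hb : Commute b (x * y)) : SemiconjBy y b a :=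
  calc y * b = y * x * y * b := by rw [hy]
    _ = y * (x * y * b) := by simp only [mul_assoc]
    _ = y * (b * (x * y)) := by rw [← hb.eq]
    _ = y * (b * x) * y := by simp only [mul_assoc]
    _ = y * (x * a) * y := by rw [← h.eq]
    _ = y * x * a * y := by simp only [mul_assoc]
    _ = a * (y * x) * y := by rw [ha.eq]
    _ = a * y := by rw [mul_assoc, hy]

theorem Urel2345.mk'_eq {n : ℕ} {u v : Cw n} (h : Urel2345 n u v) :
    (conGen (Urel2345 n)).mk' u = (conGen (Urel2345 n)).mk' v :=
  (Con.eq _).mpr (ConGen.Rel.of u v h)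

theorem Urel2345.commute_mk'_Ce {n : ℕ} (i j : Fin n) :
    Commute ((conGen (Urel2345 n)).mk' (Ce i)) ((conGen (Urel2345 n)).mk' (Ce j)) := by
  rcases lt_trichotomy i j with hij | rfl | hji
  · rw [Commute, SemiconjBy, ← map_mul, ← map_mul, Urel2345.mk'_eq (.u4 i j hij)]
  · exact Commute.refl _
  · rw [Commute, SemiconjBy, ← map_mul, ← map_mul, Urel2345.mk'_eq (.u4 j i hji)]

/-- For `1 ≤ i ≤ n-1`, the relation `e_{i+1} y = y e_i` is a
consequence of the relations `U_2`–`U_5` (here the letter `e_{i+1}` is `Ce ⟨i,_⟩` and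
the letter `e_i` is `Ce ⟨i-1,_⟩`, in `0`-based indexing). -/
theorem Urel2345.consequence_ey (n : ℕ) (i : ℕ) (h1 : 1 ≤ i)
    (h2 : i ≤ n - 1) :
    conGen (Urel2345 n) (Ce ⟨i, by omega⟩ * Cy n) (Cy n * Ce ⟨i - 1, by omega⟩) := by
  set π := (conGen (Urel2345 n)).mk'
  let first : Fin n := ⟨0, by omega⟩
  have hyx : π (Cy n) * π (Cx n) = π (Ce first) := by
    rw [← map_mul, Urel2345.mk'_eq (.u2b first rfl)]
  have hxy : π (Cx n) * π (Cy n) = π (Ce ⟨n - 1, by omega⟩) := by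
    rw [← map_mul, Urel2345.mk'_eq (.u2a ⟨n - 1, by omega⟩ rfl)]
  have hy : π (Cy n) * π (Cx n) * π (Cy n) = π (Cy n) := by
    rw [hyx, ← map_mul, Urel2345.mk'_eq (.u3b first rfl)]
  have hx : SemiconjBy (π (Cx n)) (π (Ce ⟨i, by omega⟩)) (π (Ce ⟨i - 1, by omega⟩)) := by
    rw [SemiconjBy, ← map_mul, ← map_mul,
      Urel2345.mk'_eq (.u5 ⟨i - 1, by omega⟩ ⟨i, by omega⟩ (by dsimp only; omega))]
  have hey := hx.of_mul_mul_eq_self hy (hyx ▸ Urel2345.commute_mk'_Ce _ _)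
    (hxy ▸ Urel2345.commute_mk'_Ce _ _)
  rw [SemiconjBy, ← map_mul, ← map_mul] at hey
  exact (Con.eq _).mp hey.symm
end

section
/- In the free monoid C* on the alphabet C = {x, y, e_1, …, e_n}, the relations e_1 ⋯ e_n x = x e_1 ⋯ e_n = e_1 ⋯ e_n = e_1 ⋯ e_n y = y e_1 ⋯ e_n are consequences of the set of relations U. -/
/-- The set `U` of relations of the paper (in `0`-based indexing of the letters `e`):
`(U_1) e_i² = e_i`; `(U_2) xy = e_n` and `yx = e_1`; `(U_3) x e_1 = x` and `e_1 y = y`;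
`(U_4) e_i e_j = e_j e_i` for `i < j`; `(U_5) x e_{i+1} = e_i x` for `1 ≤ i ≤ n-1`;
`(U_6) x e_2 ⋯ e_n = e_1 e_2 ⋯ e_n`. -/
inductive Urel (n : ℕ) : Cw n → Cw n → Prop
  | u1 (i : Fin n) : Urel n (Ce i * Ce i) (Ce i)
  | u2a (j : Fin n) : (j : ℕ) = n - 1 → Urel n (Cx n * Cy n) (Ce j)
  | u2b (i : Fin n) : (i : ℕ) = 0 → Urel n (Cy n * Cx n) (Ce i)
  | u3a (i : Fin n) : (i : ℕ) = 0 → Urel n (Cx n * Ce i) (Cx n)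
  | u3b (i : Fin n) : (i : ℕ) = 0 → Urel n (Ce i * Cy n) (Cy n)
  | u4 (i j : Fin n) : i < j → Urel n (Ce i * Ce j) (Ce j * Ce i)
  | u5 (i j : Fin n) : (i : ℕ) + 1 = (j : ℕ) → Urel n (Cx n * Ce j) (Ce i * Cx n)
  | u6 : Urel n (Cx n * CeProdTail n) (CeProd n)

theorem SemiconjBy.list_prod_ofFn {M : Type*} [Monoid M] {a : M} {k : ℕ} {f g : Fin k → M}
    (h : ∀ i, SemiconjBy a (f i) (g i)) :
    SemiconjBy a (List.ofFn f).prod (List.ofFn g).prod := by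
  induction k with
  | zero => exact SemiconjBy.one_right a
  | succ k ih =>
    simp only [List.ofFn_succ, List.prod_cons]
    exact (h 0).mul_right (ih fun i => h i.succ)

namespace Urel

open PresentedMonoid

def CeProdInit (m : ℕ) : Cw (m + 1) := (List.ofFn fun i : Fin m => Ce i.castSucc).prod

theorem ceProd_eq_ofFn (n : ℕ) : CeProd n = (List.ofFn Ce).prod := by
  rw [CeProd, List.ofFn_eq_map]

theorem ceProdTail_succ (m : ℕ) :
    CeProdTail (m + 1) = (List.ofFn fun i : Fin m => Ce i.succ).prod := by
  rw [CeProdTail, List.finRange_succ, List.drop_one, List.tail_cons, List.map_map,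
    List.ofFn_eq_map]
  rfl

theorem ceProd_succ_eq_ce_zero_mul (m : ℕ) : CeProd (m + 1) = Ce 0 * CeProdTail (m + 1) := by
  rw [ceProd_eq_ofFn, ceProdTail_succ, List.ofFn_succ, List.prod_cons]

theorem ceProd_succ_eq_mul_ce_last (m : ℕ) : CeProd (m + 1) = CeProdInit m * Ce (Fin.last m) := by
  rw [ceProd_eq_ofFn, List.ofFn_succ', List.concat_eq_append, List.prod_append,
    List.prod_singleton, CeProdInit]

theorem mk_mul_mk {n : ℕ} {a b c : Cw n} (h : Urel n (a * b) c) :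
    mk (Urel n) a * mk (Urel n) b = mk (Urel n) c := by
  rw [← map_mul]
  exact mk_eq_mk_of_rel h

variable (m : ℕ)

local notation "π" => PresentedMonoid.mk (Urel (m + 1))

theorem mk_x_mul_mk_ceProd : π (Cx _) * π (CeProd _) = π (CeProd _) :=
  calc π (Cx _) * π (CeProd _) = π (Cx _) * π (Ce 0) * π (CeProdTail _) := by
        rw [ceProd_succ_eq_ce_zero_mul, map_mul, mul_assoc]
    _ = π (CeProd _) := by rw [mk_mul_mk (.u3a 0 rfl), mk_mul_mk .u6]

theorem mk_y_mul_mk_ceProd : π (Cy _) * π (CeProd _) = π (CeProd _) :=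
  calc π (Cy _) * π (CeProd _) = π (Cy _) * π (Cx _) * π (CeProdTail _) := by
        rw [mul_assoc, mk_mul_mk .u6]
    _ = π (CeProd _) := by
        rw [mk_mul_mk (.u2b 0 rfl), ← map_mul, ← ceProd_succ_eq_ce_zero_mul]

theorem mk_ce_last_mul_mk_x : π (Ce (Fin.last m)) * π (Cx _) = π (Cx _) := by
  rw [← mk_mul_mk (.u2a (Fin.last m) rfl), mul_assoc, mk_mul_mk (.u2b 0 rfl), mk_mul_mk (.u3a 0 rfl)]

theorem semiconjBy_mk_x : SemiconjBy (π (Cx _)) (π (CeProdTail _)) (π (CeProdInit m)) := by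
  rw [ceProdTail_succ, CeProdInit, map_list_prod, map_list_prod, List.map_ofFn, List.map_ofFn]
  exact SemiconjBy.list_prod_ofFn fun i => mk_mul_mk (.u5 i.castSucc i.succ rfl)

theorem mk_ceProd_mul_mk_x : π (CeProd _) * π (Cx _) = π (CeProd _) :=
  calc π (CeProd _) * π (Cx _)
      = π (CeProdInit m) * (π (Ce (Fin.last m)) * π (Cx _)) := by
        rw [ceProd_succ_eq_mul_ce_last, map_mul, mul_assoc]
    _ = π (Cx _) * π (CeProdTail _) := by rw [mk_ce_last_mul_mk_x, semiconjBy_mk_x m]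
    _ = π (CeProd _) := mk_mul_mk .u6

theorem mk_ceProd_mul_mk_y : π (CeProd _) * π (Cy _) = π (CeProd _) :=
  calc π (CeProd _) * π (Cy _)
      = π (CeProd _) * π (Cx _) * π (Cy _) := by rw [mk_ceProd_mul_mk_x]
    _ = π (CeProd _) * π (Ce (Fin.last m)) := by
        rw [mul_assoc, mk_mul_mk (.u2a (Fin.last m) rfl)]
    _ = π (CeProdInit m) * (π (Ce (Fin.last m)) * π (Ce (Fin.last m))) := by
        rw [ceProd_succ_eq_mul_ce_last, map_mul, mul_assoc]
    _ = π (CeProd _) := by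
        rw [mk_mul_mk (.u1 _), ← map_mul, ← ceProd_succ_eq_mul_ce_last]

end Urel

/-- The relations
`e_1 ⋯ e_n x = x e_1 ⋯ e_n = e_1 ⋯ e_n = e_1 ⋯ e_n y = y e_1 ⋯ e_n` are consequences of
the set of relations `U`. -/
theorem Urel.consequence_zero (n : ℕ) (hn : 1 ≤ n) :
    conGen (Urel n) (CeProd n * Cx n) (CeProd n) ∧
    conGen (Urel n) (Cx n * CeProd n) (CeProd n) ∧
    conGen (Urel n) (CeProd n * Cy n) (CeProd n) ∧
    conGen (Urel n) (Cy n * CeProd n) (CeProd n) := by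
  obtain ⟨m, rfl⟩ := Nat.exists_eq_add_of_le' hn
  simp only [← PresentedMonoid.mk_eq_mk_iff, map_mul]
  exact ⟨mk_ceProd_mul_mk_x m, mk_x_mul_mk_ceProd m, mk_ceProd_mul_mk_y m, mk_y_mul_mk_ceProd m⟩
end

section
/- In the free monoid C* on the alphabet C = {x, y, e_1, …, e_n}, the relations x^n = e_1 e_2 ⋯ e_n and y^n = e_1 e_2 ⋯ e_n are consequences of the set of relations U. -/
namespace UrelAux

variable {n : ℕ}

/-- The congruence generated by `Urel n`, as a relation. -/
abbrev c (n : ℕ) : Cw n → Cw n → Prop := fun a b => conGen (Urel n) a b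

lemma base {a b : Cw n} (h : Urel n a b) : c n a b := ConGen.Rel.of a b h

lemma crefl (a : Cw n) : c n a a := (conGen (Urel n)).refl a
lemma csymm {a b : Cw n} (h : c n a b) : c n b a := (conGen (Urel n)).symm h
lemma ctrans {a b d : Cw n} (h : c n a b) (h' : c n b d) : c n a d :=
  (conGen (Urel n)).trans h h'
lemma cmul {a b u v : Cw n} (h : c n a b) (h' : c n u v) : c n (a * u) (b * v) :=
  (conGen (Urel n)).mul h h'
lemma congr_l (a : Cw n) {u v : Cw n} (h : c n u v) : c n (a * u) (a * v) :=
  cmul (crefl a) h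
lemma congr_r (a : Cw n) {u v : Cw n} (h : c n u v) : c n (u * a) (v * a) :=
  cmul h (crefl a)

scoped notation:50 a " ∼ " b => UrelAux.c _ a b

instance : Trans (c n) (c n) (c n) := ⟨ctrans⟩
instance : Trans (Eq (α := Cw n)) (c n) (c n) := ⟨fun h h' => h ▸ h'⟩
instance : Trans (c n) (Eq (α := Cw n)) (c n) := ⟨fun h' h => h ▸ h'⟩

/-- `E n i` is the letter `e_{i+1}` when `i < n` (junk otherwise). -/
def E (n : ℕ) (i : ℕ) : Cw n := if h : i < n then Ce ⟨i, h⟩ else 1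

lemma E_eq {i : ℕ} (h : i < n) : E n i = Ce ⟨i, h⟩ := dif_pos h

/-- `P n k = e_1 ⋯ e_k`. -/
def P (n k : ℕ) : Cw n := ((List.range k).map (E n)).prod

/-- `S n m = e_{n-m+1} ⋯ e_n`. -/
def S (n m : ℕ) : Cw n := ((List.range m).map (fun i => E n (n - m + i))).prod

lemma P_zero : P n 0 = 1 := rfl

lemma P_succ (k : ℕ) : P n (k + 1) = P n k * E n k := by
  simp [P, List.range_succ]

lemma S_zero : S n 0 = 1 := rfl

lemma S_succ {m : ℕ} (hm : m < n) : S n (m + 1) = E n (n - (m + 1)) * S n m := by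
  have : (List.range (m+1)).map (fun i => E n (n - (m+1) + i)) =
      E n (n - (m+1)) :: (List.range m).map (fun i => E n (n - m + i)) := by
    rw [List.range_succ_eq_map, List.map_cons, List.map_map]
    congr 1
    apply List.map_congr_left
    intro i _
    simp only [Function.comp_apply]
    congr 1
    omega
  simp [S, this]

lemma P_eq_CeProd : P n n = CeProd n := by
  have h1 : (List.finRange n).map Ce = ((List.finRange n).map Fin.val).map (E n) := by
    rw [List.map_map]
    apply List.map_congr_left
    intro i _
    simp [Function.comp_apply, E_eq i.isLt]
  rw [CeProd, h1, (show (List.finRange n).map Fin.val = List.range n from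
    List.ext_getElem (by simp) (by simp))]
  rfl

lemma S_eq_CeProd : S n n = CeProd n := by
  rw [← P_eq_CeProd]
  unfold S P
  congr 1
  apply List.map_congr_left
  intro i _
  congr 1
  omega

lemma CeProd_split (h : 0 < n) :
    CeProd n = E n 0 * CeProdTail n := by
  obtain ⟨m, rfl⟩ : ∃ m, n = m + 1 := ⟨n - 1, by omega⟩
  rw [CeProd, CeProdTail, List.finRange_succ, E_eq h]
  simp [Ce]

/- ### base relations, rephrased -/

lemma r_u2a (h : 0 < n) : c n (Cx n * Cy n) (E n (n - 1)) := by
  rw [E_eq (by omega)]; exact base (Urel.u2a _ rfl)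

lemma r_u2b (h : 0 < n) : c n (Cy n * Cx n) (E n 0) := by
  rw [E_eq h]; exact base (Urel.u2b _ rfl)

lemma r_u3a (h : 0 < n) : c n (Cx n * E n 0) (Cx n) := by
  rw [E_eq h]; exact base (Urel.u3a _ rfl)

lemma r_u3b (h : 0 < n) : c n (E n 0 * Cy n) (Cy n) := by
  rw [E_eq h]; exact base (Urel.u3b _ rfl)

lemma r_u4 {i j : ℕ} (hij : i < j) (hj : j < n) :
    c n (E n i * E n j) (E n j * E n i) := by
  rw [E_eq (by omega), E_eq hj]
  exact base (Urel.u4 _ _ (by simpa [Fin.lt_def] using hij))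

lemma r_u5 {i : ℕ} (h : i + 1 < n) :
    c n (Cx n * E n (i + 1)) (E n i * Cx n) := by
  rw [E_eq h, E_eq (by omega)]
  exact base (Urel.u5 ⟨i, by omega⟩ ⟨i+1, h⟩ rfl)

lemma r_u6 : c n (Cx n * CeProdTail n) (CeProd n) := base Urel.u6

/- ### derived relations for x -/

lemma pushX (j k : ℕ) (h : j + k < n) :
    c n (E n j * Cx n ^ k) (Cx n ^ k * E n (j + k)) := by
  induction k generalizing j with
  | zero => simpa using crefl (E n j)
  | succ k ih =>
    calc E n j * Cx n ^ (k + 1)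
        = (E n j * Cx n) * Cx n ^ k := by rw [pow_succ', mul_assoc]
      _ ∼ (Cx n * E n (j + 1)) * Cx n ^ k := congr_r _ (csymm (r_u5 (by omega)))
      _ = Cx n * (E n (j + 1) * Cx n ^ k) := by rw [mul_assoc]
      _ ∼ Cx n * (Cx n ^ k * E n (j + 1 + k)) := congr_l _ (ih (j + 1) (by omega))
      _ = Cx n ^ (k + 1) * E n (j + (k + 1)) := by
          rw [← mul_assoc, ← pow_succ']; congr 2; omega

lemma Xe (k : ℕ) (h : k < n) :
    c n (Cx n ^ (k + 1)) (Cx n ^ (k + 1) * E n k) := by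
  calc Cx n ^ (k + 1)
      = Cx n * Cx n ^ k := pow_succ' _ _
    _ ∼ (Cx n * E n 0) * Cx n ^ k := congr_r _ (csymm (r_u3a (by omega)))
    _ = Cx n * (E n 0 * Cx n ^ k) := by rw [mul_assoc]
    _ ∼ Cx n * (Cx n ^ k * E n k) := congr_l _ (by simpa using pushX 0 k (by omega))
    _ = Cx n ^ (k + 1) * E n k := by rw [← mul_assoc, ← pow_succ']

lemma commP {j m : ℕ} (hm : m ≤ j) (hj : j < n) :
    c n (E n j * P n m) (P n m * E n j) := by
  induction m with
  | zero => simpa [P_zero] using crefl (E n j)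
  | succ m ih =>
    calc E n j * P n (m + 1)
        = (E n j * P n m) * E n m := by rw [P_succ, mul_assoc]
      _ ∼ (P n m * E n j) * E n m := congr_r _ (ih (by omega))
      _ = P n m * (E n j * E n m) := by rw [mul_assoc]
      _ ∼ P n m * (E n m * E n j) := congr_l _ (csymm (r_u4 (by omega) hj))
      _ = P n (m + 1) * E n j := by rw [P_succ, mul_assoc]

lemma collX (k : ℕ) (h : k < n) :
    c n (Cx n ^ (k + 1)) (Cx n ^ (k + 1) * P n (k + 1)) := by
  induction k with
  | zero => simpa [P_succ, P_zero] using Xe 0 (by omega)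
  | succ k ih =>
    calc Cx n ^ (k + 2)
        = Cx n * Cx n ^ (k + 1) := pow_succ' _ _
      _ ∼ Cx n * (Cx n ^ (k + 1) * P n (k + 1)) := congr_l _ (ih (by omega))
      _ = Cx n ^ (k + 2) * P n (k + 1) := by rw [← mul_assoc, ← pow_succ']
      _ ∼ (Cx n ^ (k + 2) * E n (k + 1)) * P n (k + 1) := congr_r _ (Xe (k + 1) h)
      _ = Cx n ^ (k + 2) * (E n (k + 1) * P n (k + 1)) := by rw [mul_assoc]
      _ ∼ Cx n ^ (k + 2) * (P n (k + 1) * E n (k + 1)) :=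
          congr_l _ (commP (by omega) h)
      _ = Cx n ^ (k + 2) * P n (k + 2) := by rw [P_succ (k + 1)]

/- ### derived relations for y -/

lemma ye (h : 0 < n) : c n (Cy n) (Cy n * E n (n - 1)) := by
  calc Cy n
      ∼ E n 0 * Cy n := csymm (r_u3b h)
    _ ∼ (Cy n * Cx n) * Cy n := congr_r _ (csymm (r_u2b h))
    _ = Cy n * (Cx n * Cy n) := by rw [mul_assoc]
    _ ∼ Cy n * E n (n - 1) := congr_l _ (r_u2a h)

lemma yE {j : ℕ} (h : j + 1 < n) :
    c n (Cy n * E n j) (E n (j + 1) * Cy n) := by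
  calc Cy n * E n j
      ∼ (Cy n * E n (n - 1)) * E n j := congr_r _ (ye (by omega))
    _ = Cy n * (E n (n - 1) * E n j) := by rw [mul_assoc]
    _ ∼ Cy n * (E n j * E n (n - 1)) := congr_l _ (csymm (r_u4 (by omega) (by omega)))
    _ ∼ Cy n * (E n j * (Cx n * Cy n)) :=
        congr_l _ (congr_l _ (csymm (r_u2a (by omega))))
    _ = (Cy n * ((E n j * Cx n) * Cy n)) := by rw [mul_assoc]
    _ ∼ (Cy n * ((Cx n * E n (j + 1)) * Cy n)) :=
        congr_l _ (congr_r _ (csymm (r_u5 h)))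
    _ = (Cy n * Cx n) * (E n (j + 1) * Cy n) := by
        simp only [mul_assoc]
    _ ∼ E n 0 * (E n (j + 1) * Cy n) := congr_r _ (r_u2b (by omega))
    _ = (E n 0 * E n (j + 1)) * Cy n := by rw [mul_assoc]
    _ ∼ (E n (j + 1) * E n 0) * Cy n := congr_r _ (r_u4 (by omega) h)
    _ = E n (j + 1) * (E n 0 * Cy n) := by rw [mul_assoc]
    _ ∼ E n (j + 1) * Cy n := congr_l _ (r_u3b (by omega))

lemma pushY (j k : ℕ) (hk : k ≤ j) (hj : j < n) :
    c n (E n j * Cy n ^ k) (Cy n ^ k * E n (j - k)) := by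
  induction k generalizing j with
  | zero => simpa using crefl (E n j)
  | succ k ih =>
    have hj1 : j - 1 + 1 = j := by omega
    calc E n j * Cy n ^ (k + 1)
        = (E n j * Cy n) * Cy n ^ k := by rw [pow_succ', mul_assoc]
      _ ∼ (Cy n * E n (j - 1)) * Cy n ^ k := by
          refine congr_r _ (csymm ?_)
          have := yE (n := n) (j := j - 1) (by omega)
          rwa [hj1] at this
      _ = Cy n * (E n (j - 1) * Cy n ^ k) := by rw [mul_assoc]
      _ ∼ Cy n * (Cy n ^ k * E n (j - 1 - k)) := congr_l _ (ih (j - 1) (by omega) (by omega))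
      _ = Cy n ^ (k + 1) * E n (j - (k + 1)) := by
          rw [← mul_assoc, ← pow_succ']; congr 2; omega

lemma Ye (k : ℕ) (h : k < n) :
    c n (Cy n ^ (k + 1)) (Cy n ^ (k + 1) * E n (n - 1 - k)) := by
  calc Cy n ^ (k + 1)
      = Cy n * Cy n ^ k := pow_succ' _ _
    _ ∼ (Cy n * E n (n - 1)) * Cy n ^ k := congr_r _ (ye (by omega))
    _ = Cy n * (E n (n - 1) * Cy n ^ k) := by rw [mul_assoc]
    _ ∼ Cy n * (Cy n ^ k * E n (n - 1 - k)) :=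
        congr_l _ (pushY (n - 1) k (by omega) (by omega))
    _ = Cy n ^ (k + 1) * E n (n - 1 - k) := by rw [← mul_assoc, ← pow_succ']

lemma collY (k : ℕ) (h : k < n) :
    c n (Cy n ^ (k + 1)) (Cy n ^ (k + 1) * S n (k + 1)) := by
  induction k with
  | zero =>
    have := Ye (n := n) 0 (by omega)
    simpa [S_succ (by omega : 0 < n), S_zero] using this
  | succ k ih =>
    calc Cy n ^ (k + 2)
        = Cy n * Cy n ^ (k + 1) := pow_succ' _ _
      _ ∼ Cy n * (Cy n ^ (k + 1) * S n (k + 1)) := congr_l _ (ih (by omega))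
      _ = Cy n ^ (k + 2) * S n (k + 1) := by rw [← mul_assoc, ← pow_succ']
      _ ∼ (Cy n ^ (k + 2) * E n (n - 1 - (k + 1))) * S n (k + 1) :=
          congr_r _ (Ye (k + 1) h)
      _ = Cy n ^ (k + 2) * (E n (n - (k + 2)) * S n (k + 1)) := by
          rw [mul_assoc]; congr 3; omega
      _ = Cy n ^ (k + 2) * S n (k + 2) := by rw [S_succ h]

/- ### absorption -/

lemma absX (h : 0 < n) : c n (Cx n * CeProd n) (CeProd n) := by
  calc Cx n * CeProd n
      = Cx n * (E n 0 * CeProdTail n) := by rw [CeProd_split h]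
    _ = (Cx n * E n 0) * CeProdTail n := by rw [mul_assoc]
    _ ∼ Cx n * CeProdTail n := congr_r _ (r_u3a h)
    _ ∼ CeProd n := r_u6

lemma absY (h : 0 < n) : c n (Cy n * CeProd n) (CeProd n) := by
  calc Cy n * CeProd n
      ∼ Cy n * (Cx n * CeProdTail n) := congr_l _ (csymm r_u6)
    _ = (Cy n * Cx n) * CeProdTail n := by rw [mul_assoc]
    _ ∼ E n 0 * CeProdTail n := congr_r _ (r_u2b h)
    _ = CeProd n := (CeProd_split h).symm

lemma absXpow (h : 0 < n) (k : ℕ) : c n (Cx n ^ k * CeProd n) (CeProd n) := by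
  induction k with
  | zero => simpa using crefl (CeProd n)
  | succ k ih =>
    calc Cx n ^ (k + 1) * CeProd n
        = Cx n ^ k * (Cx n * CeProd n) := by rw [pow_succ, mul_assoc]
      _ ∼ Cx n ^ k * CeProd n := congr_l _ (absX h)
      _ ∼ CeProd n := ih

lemma absYpow (h : 0 < n) (k : ℕ) : c n (Cy n ^ k * CeProd n) (CeProd n) := by
  induction k with
  | zero => simpa using crefl (CeProd n)
  | succ k ih =>
    calc Cy n ^ (k + 1) * CeProd n
        = Cy n ^ k * (Cy n * CeProd n) := by rw [pow_succ, mul_assoc]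
      _ ∼ Cy n ^ k * CeProd n := congr_l _ (absY h)
      _ ∼ CeProd n := ih

end UrelAux

/-- The relations `xⁿ = e_1 ⋯ e_n` and `yⁿ = e_1 ⋯ e_n` are
consequences of the set of relations `U`. -/
theorem Urel.consequence_npow (n : ℕ) (hn : 1 ≤ n) :
    conGen (Urel n) (Cx n ^ n) (CeProd n) ∧
    conGen (Urel n) (Cy n ^ n) (CeProd n) := by
  open UrelAux in
  obtain ⟨m, rfl⟩ : ∃ m, n = m + 1 := ⟨n - 1, by omega⟩
  constructor
  · calc Cx (m+1) ^ (m+1)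
        ∼ Cx (m+1) ^ (m+1) * P (m+1) (m+1) := collX m (by omega)
      _ = Cx (m+1) ^ (m+1) * CeProd (m+1) := by rw [P_eq_CeProd]
      _ ∼ CeProd (m+1) := absXpow (by omega) (m+1)
  · calc Cy (m+1) ^ (m+1)
        ∼ Cy (m+1) ^ (m+1) * S (m+1) (m+1) := collY m (by omega)
      _ = Cy (m+1) ^ (m+1) * CeProd (m+1) := by rw [S_eq_CeProd]
      _ ∼ CeProd (m+1) := absYpow (by omega) (m+1)
end
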